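/- arXiv:1612.01315 — 5 statements merged into one kernel-verified Lean document; each statement's English description precedes it below -/
import Mathlib

section
/- Let A be a nonconstant rational map of the Riemann sphere, and let O₁, …, O_s and O₁′, …, O_s′ be orbifolds on ℂP¹ such that for each i, A : O_i → O_i′ is a holomorphic map (respectively: a minimal holomorphic map; a covering map) between orbifolds. Then A : LCM(O₁, …, O_s) → LCM(O₁′, …, O_s′) is also a holomorphic map (respectively: a minimal holomorphic map; a covering map) between orbifolds. -/
open Polynomial OnePoint
open scoped Classical

noncomputable section

namespace GenLattes

/-- Composition of rational functions: `rcomp f g = f ∘ g`. -/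
def rcomp (f g : RatFunc ℂ) : RatFunc ℂ :=
  Polynomial.aeval g f.num / Polynomial.aeval g f.denom

/-- The degree of a rational function: the maximum of the degrees of its numerator and
denominator in lowest terms. -/
def rdeg (f : RatFunc ℂ) : ℕ := max f.num.natDegree f.denom.natDegree

/-- Evaluation of a rational function at a finite point, with value in the Riemann
sphere `ℂP¹ = OnePoint ℂ`. -/
def evalF (f : RatFunc ℂ) (z : ℂ) : OnePoint ℂ :=
  if f.denom.eval z = 0 then ∞ else ((f.num.eval z / f.denom.eval z : ℂ) : OnePoint ℂ)

/-- The local degree (local multiplicity) of a rational function at a finite point. -/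
def locDegF (f : RatFunc ℂ) (z : ℂ) : ℕ :=
  if f.denom.eval z = 0 then rootMultiplicity z f.denom
  else rootMultiplicity z (f.num - Polynomial.C (f.num.eval z / f.denom.eval z) * f.denom)

/-- The rational function `f(1/X)`. -/
def flip (f : RatFunc ℂ) : RatFunc ℂ := rcomp f (RatFunc.X)⁻¹

/-- The self-map of the Riemann sphere `ℂP¹ = OnePoint ℂ` induced by a rational function. -/
def evalOP (f : RatFunc ℂ) (x : OnePoint ℂ) : OnePoint ℂ :=
  OnePoint.rec (evalF (flip f) 0) (fun z => evalF f z) x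

/-- The local degree `deg_x f` of a rational function at a point of the Riemann sphere. -/
def locDeg (f : RatFunc ℂ) (x : OnePoint ℂ) : ℕ :=
  OnePoint.rec (locDegF (flip f) 0) (fun z => locDegF f z) x

/-- The iterate `f^{∘l}` of a rational function (with `riter f 0 = X = id`). -/
def riter (f : RatFunc ℂ) : ℕ → RatFunc ℂ
  | 0 => RatFunc.X
  | l + 1 => rcomp f (riter f l)

/-- An orbifold on the Riemann sphere: a ramification function `ν : ℂP¹ → ℕ` with
`ν(z) ≥ 1` everywhere and `ν(z) = 1` outside a finite set. -/
structure Orbifold where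
  nu : OnePoint ℂ → ℕ
  one_le : ∀ z, 1 ≤ nu z
  finite : {z : OnePoint ℂ | nu z ≠ 1}.Finite

/-- A good orbifold: it is forbidden to have exactly one point with `ν > 1`, or exactly
two such points with different values of `ν`. -/
def Orbifold.Good (O : Orbifold) : Prop :=
  (¬ ∃ z, {w : OnePoint ℂ | O.nu w ≠ 1} = {z}) ∧
  (¬ ∃ z₁ z₂, z₁ ≠ z₂ ∧ {w : OnePoint ℂ | O.nu w ≠ 1} = {z₁, z₂} ∧ O.nu z₁ ≠ O.nu z₂)

/-- A nontrivial orbifold (distinct from the non-ramified sphere). -/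
def Orbifold.IsNontrivial (O : Orbifold) : Prop := ∃ z, 1 < O.nu z

/-- The relation `O₁ ⪯ O₂`: pointwise divisibility of ramification functions. -/
def Orbifold.Prec (O₁ O₂ : Orbifold) : Prop := ∀ z, O₁.nu z ∣ O₂.nu z

/-- The signature of an orbifold: the multiset of values of `ν` on `c(O) = {ν > 1}`. -/
def Orbifold.signature (O : Orbifold) : Multiset ℕ := O.finite.toFinset.val.map O.nu

/-- The Euler characteristic `χ(O) = 2 + Σ (1/ν(z) - 1)`. -/
def Orbifold.eulerChar (O : Orbifold) : ℚ :=
  2 + ∑ z ∈ O.finite.toFinset, ((O.nu z : ℚ)⁻¹ - 1)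

/-- `A : O₁ → O₂` is a holomorphic map between orbifolds:
`ν₂(A(z)) ∣ ν₁(z)·deg_z A` for all `z`. -/
def IsHolo (A : RatFunc ℂ) (O₁ O₂ : Orbifold) : Prop :=
  ∀ z, O₂.nu (evalOP A z) ∣ O₁.nu z * locDeg A z

/-- `A : O₁ → O₂` is a minimal holomorphic map between orbifolds:
`ν₂(A(z)) = ν₁(z)·gcd(deg_z A, ν₂(A(z)))` for all `z`. -/
def IsMinHolo (A : RatFunc ℂ) (O₁ O₂ : Orbifold) : Prop :=
  ∀ z, O₂.nu (evalOP A z) = O₁.nu z * Nat.gcd (locDeg A z) (O₂.nu (evalOP A z))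

/-- `A : O₁ → O₂` is a covering map between orbifolds:
`ν₂(A(z)) = ν₁(z)·deg_z A` for all `z`. -/
def IsCovering (A : RatFunc ℂ) (O₁ O₂ : Orbifold) : Prop :=
  ∀ z, O₂.nu (evalOP A z) = O₁.nu z * locDeg A z

/-- `A` and `B` are conjugate by a Möbius transformation: `A = μ ∘ B ∘ μ⁻¹`. -/
def Conjugate (A B : RatFunc ℂ) : Prop :=
  ∃ μ ν : RatFunc ℂ, rcomp μ ν = RatFunc.X ∧ rcomp ν μ = RatFunc.X ∧
    A = rcomp (rcomp μ B) ν

/-- The Chebyshev polynomial `T_d` viewed as a rational function. -/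
def chebyRF (d : ℕ) : RatFunc ℂ :=
  algebraMap (Polynomial ℂ) (RatFunc ℂ) (Polynomial.Chebyshev.T ℂ d)

end GenLattes

namespace GenLattes

private lemma key_lcm (d b1 b2 a1 a2 : ℕ) (hb1 : 0 < b1) (hb2 : 0 < b2)
    (h1 : b1 = a1 * Nat.gcd d b1) (h2 : b2 = a2 * Nat.gcd d b2) :
    Nat.lcm b1 b2 = Nat.lcm a1 a2 * Nat.gcd d (Nat.lcm b1 b2) := by
  rcases Nat.eq_zero_or_pos d with rfl | hd
  · simp only [Nat.gcd_zero_left] at h1 h2 ⊢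
    have ha1 : a1 = 1 := by
      rcases Nat.eq_zero_or_pos a1 with rfl | h
      · simp at h1; omega
      · nlinarith [h1]
    have ha2 : a2 = 1 := by
      rcases Nat.eq_zero_or_pos a2 with rfl | h
      · simp at h2; omega
      · nlinarith [h2]
    simp [ha1, ha2, Nat.lcm]
  · have ha1 : a1 ≠ 0 := by rintro rfl; simp at h1; omega
    have ha2 : a2 ≠ 0 := by rintro rfl; simp at h2; omega
    have hl : Nat.lcm b1 b2 ≠ 0 := Nat.lcm_ne_zero hb1.ne' hb2.ne'
    have hla : Nat.lcm a1 a2 ≠ 0 := Nat.lcm_ne_zero ha1 ha2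
    have hg : Nat.gcd d (Nat.lcm b1 b2) ≠ 0 := (Nat.gcd_pos_of_pos_left _ hd).ne'
    refine Nat.eq_of_factorization_eq hl (by positivity) fun p => ?_
    have e1 := congrArg (fun n => n.factorization p) h1
    have e2 := congrArg (fun n => n.factorization p) h2
    simp only [Nat.factorization_mul ha1 (Nat.gcd_pos_of_pos_left _ hd).ne',
      Nat.factorization_mul ha2 (Nat.gcd_pos_of_pos_left _ hd).ne',
      Nat.factorization_gcd hd.ne' hb1.ne', Nat.factorization_gcd hd.ne' hb2.ne',
      Finsupp.add_apply, Finsupp.inf_apply] at e1 e2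
    rw [Nat.factorization_lcm hb1.ne' hb2.ne',
      Nat.factorization_mul hla hg,
      Nat.factorization_gcd hd.ne' hl, Nat.factorization_lcm hb1.ne' hb2.ne',
      Nat.factorization_lcm ha1 ha2]
    simp only [Finsupp.add_apply, Finsupp.inf_apply, Finsupp.sup_apply]
    omega

private lemma lcm_pos_aux {ι : Type*} (t : Finset ι) (b : ι → ℕ) (hb : ∀ i ∈ t, 0 < b i) :
    0 < t.lcm b := by
  refine Nat.pos_of_ne_zero fun h0 => ?_
  rw [Finset.lcm_eq_zero_iff] at h0
  obtain ⟨i, hi, h0⟩ := h0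
  exact (hb i hi).ne' h0

private lemma lcm_min_aux {ι : Type*} (s : Finset ι) (hs : s.Nonempty) (d : ℕ) (a b : ι → ℕ)
    (hb : ∀ i ∈ s, 0 < b i) (h : ∀ i ∈ s, b i = a i * Nat.gcd d (b i)) :
    s.lcm b = s.lcm a * Nat.gcd d (s.lcm b) := by
  induction hs using Finset.Nonempty.cons_induction with
  | singleton i => simpa using h i (by simp)
  | cons i t hit ht ih =>
    simp only [Finset.cons_eq_insert, Finset.lcm_insert, lcm_eq_nat_lcm] at *
    have hb' : ∀ j ∈ t, 0 < b j := fun j hj => hb j (by simp [hj])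
    have h' : ∀ j ∈ t, b j = a j * Nat.gcd d (b j) := fun j hj => h j (by simp [hj])
    exact key_lcm d (b i) (t.lcm b) (a i) (t.lcm a) (hb i (by simp))
      (lcm_pos_aux t b hb') (h i (by simp)) (ih hb' h')

/-- **Theorem (LCM of orbifolds).** If `A : O_i → O_i'` is a holomorphic map
(resp. minimal holomorphic map, covering map) between orbifolds for each `i`, then
`A : LCM(O₁,…,O_s) → LCM(O₁',…,O_s')` is also a holomorphic map (resp. minimal holomorphic
map, covering map). Here `L` and `L'` are the orbifolds whose ramification functions are
the pointwise `lcm` of those of the `O_i`, resp. the `O_i'`. -/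
theorem lcm_orbifold (s : ℕ) (hs : 1 ≤ s) (A : RatFunc ℂ) (hA : 1 ≤ rdeg A)
    (O O' : Fin s → Orbifold) (L L' : Orbifold)
    (hL : ∀ z, L.nu z = Finset.univ.lcm (fun i => (O i).nu z))
    (hL' : ∀ z, L'.nu z = Finset.univ.lcm (fun i => (O' i).nu z)) :
    ((∀ i, IsHolo A (O i) (O' i)) → IsHolo A L L') ∧
    ((∀ i, IsMinHolo A (O i) (O' i)) → IsMinHolo A L L') ∧
    ((∀ i, IsCovering A (O i) (O' i)) → IsCovering A L L') := by
  have hne : Nonempty (Fin s) := ⟨⟨0, hs⟩⟩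
  refine ⟨fun h z => ?_, fun h z => ?_, fun h z => ?_⟩
  · rw [hL, hL']
    refine Finset.lcm_dvd fun i _ => ?_
    exact (h i z).trans (Nat.mul_dvd_mul_right (Finset.dvd_lcm (Finset.mem_univ i)) _)
  · rw [hL, hL' (evalOP A z)]
    exact lcm_min_aux Finset.univ Finset.univ_nonempty (locDeg A z)
      (fun i => (O i).nu z) (fun i => (O' i).nu (evalOP A z))
      (fun i _ => (O' i).one_le _) (fun i _ => h i z)
  · rw [hL, hL' (evalOP A z)]
    have hmin : ∀ i ∈ (Finset.univ : Finset (Fin s)),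
        (O' i).nu (evalOP A z) =
          (O i).nu z * Nat.gcd (locDeg A z) ((O' i).nu (evalOP A z)) := by
      intro i _
      rw [h i z, Nat.gcd_eq_left (dvd_mul_left _ _)]
    have hd : locDeg A z ∣ Finset.univ.lcm (fun i => (O' i).nu (evalOP A z)) := by
      obtain ⟨i⟩ := hne
      refine dvd_trans ?_ (Finset.dvd_lcm (Finset.mem_univ i))
      rw [h i z]; exact dvd_mul_left _ _
    rw [lcm_min_aux Finset.univ Finset.univ_nonempty (locDeg A z)
      (fun i => (O i).nu z) (fun i => (O' i).nu (evalOP A z))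
      (fun i _ => (O' i).one_le _) hmin, Nat.gcd_eq_left hd]


end GenLattes
end
end

section
/- Let s ≥ 1 and let a₁, …, a_s, b₁, …, b_s and d be positive integers such that b_i = a_i · gcd(b_i, d) for every i. Then lcm(b₁, …, b_s) = lcm(a₁, …, a_s) · gcd(lcm(b₁, …, b_s), d). Moreover, if instead only b_i divides a_i·d for every i, then lcm(b₁, …, b_s) divides lcm(a₁, …, a_s) · d. -/
open Polynomial OnePoint
open scoped Classical

noncomputable section

/-- **Pointwise number-theoretic form of the LCM theorem.** If `b_i = a_i · gcd(b_i, d)`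
for all `i`, then `lcm(b) = lcm(a) · gcd(lcm(b), d)`; and if merely `b_i ∣ a_i·d` for all
`i`, then `lcm(b) ∣ lcm(a)·d`. -/
theorem lcm_gcd_identity (s : ℕ) (hs : 1 ≤ s) (a b : Fin s → ℕ) (d : ℕ)
    (ha : ∀ i, 0 < a i) (hb : ∀ i, 0 < b i) (hd : 0 < d) :
    ((∀ i, b i = a i * Nat.gcd (b i) d) →
      Finset.univ.lcm b = Finset.univ.lcm a * Nat.gcd (Finset.univ.lcm b) d) ∧
    ((∀ i, b i ∣ a i * d) →
      Finset.univ.lcm b ∣ Finset.univ.lcm a * d) := by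
  have hbL : ∀ i, b i ∣ Finset.univ.lcm b := fun i => Finset.dvd_lcm (Finset.mem_univ i)
  have haM : ∀ i, a i ∣ Finset.univ.lcm a := fun i => Finset.dvd_lcm (Finset.mem_univ i)
  constructor
  · intro h
    set L := Finset.univ.lcm b with hLdef
    set M := Finset.univ.lcm a with hMdef
    set g := Nat.gcd L d with hgdef
    have hg : 0 < g := Nat.gcd_pos_of_pos_right _ hd
    -- Step A: L ∣ M * g
    have hA : L ∣ M * g := Finset.lcm_dvd fun i _ => by
      rw [h i]
      exact mul_dvd_mul (haM i)
        (Nat.dvd_gcd ((Nat.gcd_dvd_left _ _).trans (hbL i)) (Nat.gcd_dvd_right _ _))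
    -- Key: a i * g ∣ L for each i
    have key : ∀ i, a i * g ∣ L := by
      intro i
      have hc : Nat.gcd (b i) g ∣ Nat.gcd (b i) d :=
        Nat.dvd_gcd (Nat.gcd_dvd_left _ _)
          ((Nat.gcd_dvd_right _ _).trans (Nat.gcd_dvd_right L d))
      obtain ⟨k, hk⟩ := hc
      have hcpos : 0 < Nat.gcd (b i) g := Nat.gcd_pos_of_pos_left _ (hb i)
      have hlcm : Nat.gcd (b i) g * Nat.lcm (b i) g = b i * g := Nat.gcd_mul_lcm _ _
      have heq : Nat.lcm (b i) g = a i * g * k := by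
        apply Nat.eq_of_mul_eq_mul_left hcpos
        rw [hlcm]
        conv_lhs => rw [h i, hk]
        ring
      have hdvd : a i * g ∣ Nat.lcm (b i) g := ⟨k, heq⟩
      exact hdvd.trans (Nat.lcm_dvd (hbL i) (Nat.gcd_dvd_left L d))
    obtain ⟨L', hL'⟩ : g ∣ L := Nat.gcd_dvd_left L d
    have hML' : M ∣ L' := by
      apply Finset.lcm_dvd
      intro i _
      have : g * a i ∣ g * L' := by
        rw [mul_comm g (a i), ← hL']
        exact key i
      exact (mul_dvd_mul_iff_left hg.ne').mp this
    have hB : M * g ∣ L := by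
      rw [hL', mul_comm M g]
      exact mul_dvd_mul_left g hML'
    exact Nat.dvd_antisymm hA hB
  · intro h
    exact Finset.lcm_dvd fun i _ => (h i).trans (mul_dvd_mul_right (haM i) d)
end
end

section
/- Let A be a rational map of degree at least two such that some iterate A^{∘l} (l ≥ 1) is a Lattès map. Then A is a Lattès map. -/
open Polynomial OnePoint
open scoped Classical

noncomputable section

namespace GenLattes

/-- A Lattès map: a rational map of degree at least two admitting a nontrivial orbifold
`O` on `ℂP¹` such that `A : O → O` is a covering self-map. -/
def IsLattes (A : RatFunc ℂ) : Prop :=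
  2 ≤ rdeg A ∧ ∃ O : Orbifold, O.IsNontrivial ∧ IsCovering A O O

/-!
If `A^{∘l} : O → O` is a covering, then for `j ≤ l` the orbifold `O_j` with
`ν_j(A^{∘j} x) = ν(x) · deg_x A^{∘j}` is well defined: writing `A^{∘l} = A^{∘(l-j)} ∘ A^{∘j}`,
the chain rule `deg_x (F ∘ G) = deg_x G · deg_{G x} F` lets the factor `deg A^{∘(l-j)}` cancel.
Then `A : O_j → O_{j+1}` is a covering and `O_0 = O = O_l`, so the cyclic family gives
`lcm_j ν_j(A x) = lcm_j ν_{j+1}(A x) = (lcm_j ν_j(x)) · deg_x A`: `A` is a covering of the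
nontrivial orbifold `lcm_{j<l} ν_j` onto itself.

The chain rule for local degrees follows from `ord_x (u ∘ g) = deg_x g · ord_{g x} u` for orders
of vanishing, which is read off from the factorisation of the numerator and denominator of `u`
into linear factors.
-/

/-! ### Composition of rational functions -/

def Nonconst (f : RatFunc ℂ) : Prop := ∀ c : ℂ, f ≠ RatFunc.C c

namespace Nonconst

variable {f : RatFunc ℂ}

lemma ne_zero (hf : Nonconst f) : f ≠ 0 := by
  simpa using hf 0

lemma sub_C_ne_zero (hf : Nonconst f) (c : ℂ) : f - RatFunc.C c ≠ 0 :=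
  fun h => hf c (sub_eq_zero.mp h)

lemma sub_C (hf : Nonconst f) (c : ℂ) : Nonconst (f - RatFunc.C c) :=
  fun d hd => hf (d + c) (by rw [map_add, ← hd, sub_add_cancel])

lemma inv (hf : Nonconst f) : Nonconst f⁻¹ :=
  fun c hc => hf c⁻¹ (by rw [map_inv₀, ← hc, inv_inv])

lemma num_sub_C_mul_denom_ne_zero (hf : Nonconst f) (c : ℂ) :
    f.num - Polynomial.C c * f.denom ≠ 0 := by
  intro h
  apply hf c
  rw [← RatFunc.num_div_denom f, sub_eq_zero.mp h, map_mul, RatFunc.algebraMap_C,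
    mul_div_cancel_right₀ _ (by simpa using f.denom_ne_zero)]

end Nonconst

lemma nonconst_of_two_le_rdeg {A : RatFunc ℂ} (hA : 2 ≤ rdeg A) : Nonconst A := by
  rintro c rfl
  simp [rdeg, RatFunc.num_C, RatFunc.denom_C] at hA

lemma nonconst_X : Nonconst (RatFunc.X : RatFunc ℂ) := by
  intro c hc
  exact Polynomial.X_ne_C c (by simpa [RatFunc.num_C] using congrArg RatFunc.num hc)

lemma nonconst_inv_X : Nonconst (RatFunc.X : RatFunc ℂ)⁻¹ :=
  nonconst_X.inv

lemma aeval_eq_C_mul_prod (g : RatFunc ℂ) {q : Polynomial ℂ} :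
    Polynomial.aeval g q =
      RatFunc.C q.leadingCoeff * (q.roots.map (fun a => g - RatFunc.C a)).prod := by
  conv_lhs => rw [← Polynomial.C_leadingCoeff_mul_prod_multiset_X_sub_C
    (IsAlgClosed.card_roots_eq_natDegree (p := q))]
  simp [map_multiset_prod, Multiset.map_map, RatFunc.algebraMap_eq_C]

lemma Nonconst.aeval_ne_zero {g : RatFunc ℂ} (hg : Nonconst g) {q : Polynomial ℂ}
    (hq : q ≠ 0) : Polynomial.aeval g q ≠ 0 := by
  rw [aeval_eq_C_mul_prod g]
  refine mul_ne_zero (by simpa using hq) ?_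
  rw [Ne, Multiset.prod_eq_zero_iff, Multiset.mem_map]
  rintro ⟨a, -, ha⟩
  exact hg.sub_C_ne_zero a ha

/-- `compHom hg f = f ∘ g`: for nonconstant `g`, `aeval g` is injective on `ℂ[X]`, so it extends
to `ℂ(X)`. -/
def compHom {g : RatFunc ℂ} (hg : Nonconst g) : RatFunc ℂ →+* RatFunc ℂ :=
  IsFractionRing.lift (A := Polynomial ℂ) (g := (Polynomial.aeval g).toRingHom) <| by
    refine (injective_iff_map_eq_zero _).mpr fun p hp => ?_
    by_contra h
    exact hg.aeval_ne_zero h hp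

section compHom

variable {g : RatFunc ℂ} (hg : Nonconst g)

lemma compHom_algebraMap (p : Polynomial ℂ) :
    compHom hg (algebraMap (Polynomial ℂ) (RatFunc ℂ) p) = Polynomial.aeval g p :=
  IsFractionRing.lift_algebraMap _ _

lemma compHom_C (c : ℂ) : compHom hg (RatFunc.C c) = RatFunc.C c := by
  conv_lhs => rw [← RatFunc.algebraMap_C]
  rw [compHom_algebraMap, Polynomial.aeval_C, RatFunc.algebraMap_eq_C]

lemma compHom_X : compHom hg RatFunc.X = g := by
  rw [← RatFunc.algebraMap_X, compHom_algebraMap, Polynomial.aeval_X]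

lemma compHom_sub_C (f : RatFunc ℂ) (c : ℂ) :
    compHom hg (f - RatFunc.C c) = compHom hg f - RatFunc.C c := by
  rw [map_sub, compHom_C]

lemma rcomp_eq_compHom (f : RatFunc ℂ) : rcomp f g = compHom hg f := by
  conv_rhs => rw [← RatFunc.num_div_denom f]
  rw [map_div₀, compHom_algebraMap, compHom_algebraMap]
  rfl

lemma nonconst_compHom {f : RatFunc ℂ} (hf : Nonconst f) : Nonconst (compHom hg f) :=
  fun c hc => hf c ((compHom hg).injective (by rw [hc, compHom_C]))

lemma compHom_compHom {h : RatFunc ℂ} (hh : Nonconst h) (f : RatFunc ℂ) :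
    compHom hh (compHom hg f) = compHom (nonconst_compHom hh hg) f := by
  suffices (compHom hh).comp (compHom hg) = compHom (nonconst_compHom hh hg) from
    RingHom.congr_fun this f
  refine IsLocalization.ringHom_ext (nonZeroDivisors (Polynomial ℂ))
    (Polynomial.ringHom_ext (fun a => ?_) ?_)
  · simp [RatFunc.algebraMap_C, compHom_C]
  · simp [RatFunc.algebraMap_X, compHom_X]

end compHom

lemma Nonconst.rcomp {f g : RatFunc ℂ} (hf : Nonconst f) (hg : Nonconst g) :
    Nonconst (rcomp f g) := by
  rw [rcomp_eq_compHom hg]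
  exact nonconst_compHom hg hf

lemma X_rcomp {g : RatFunc ℂ} (hg : Nonconst g) : rcomp RatFunc.X g = g := by
  rw [rcomp_eq_compHom hg, compHom_X]

lemma rcomp_assoc (f : RatFunc ℂ) {g h : RatFunc ℂ} (hg : Nonconst g) (hh : Nonconst h) :
    rcomp (rcomp f g) h = rcomp f (rcomp g h) := by
  rw [rcomp_eq_compHom hg, rcomp_eq_compHom hh, rcomp_eq_compHom hh, compHom_compHom,
    rcomp_eq_compHom (nonconst_compHom hh hg)]

/-! ### Orders of vanishing -/

lemma eval_num_ne_zero_of_eval_denom_eq_zero {f : RatFunc ℂ} {z : ℂ}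
    (h : f.denom.eval z = 0) : f.num.eval z ≠ 0 := by
  intro hn
  obtain ⟨a, b, hab⟩ := RatFunc.isCoprime_num_denom f
  simpa [hn, h] using congrArg (Polynomial.eval z) hab

lemma num_mul_eq_mul_denom_of_eq_div {f : RatFunc ℂ} {p q : Polynomial ℂ} (hq : q ≠ 0)
    (hf : f = algebraMap _ _ p / algebraMap _ _ q) : f.num * q = p * f.denom := by
  apply RatFunc.algebraMap_injective ℂ
  rw [map_mul, map_mul, ← div_eq_div_iff (by simpa using f.denom_ne_zero) (by simpa using hq),
    RatFunc.num_div_denom, hf]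

def ordAt (z : ℂ) (f : RatFunc ℂ) : ℤ :=
  (rootMultiplicity z f.num : ℤ) - rootMultiplicity z f.denom

lemma ordAt_eq_of_eq_div {f : RatFunc ℂ} {p q : Polynomial ℂ} (hp : p ≠ 0) (hq : q ≠ 0)
    (hf : f = algebraMap _ _ p / algebraMap _ _ q) (z : ℂ) :
    ordAt z f = (rootMultiplicity z p : ℤ) - rootMultiplicity z q := by
  have hnum : f.num ≠ 0 := RatFunc.num_ne_zero (by simp [hf, hp, hq])
  have h := congrArg (rootMultiplicity z) (num_mul_eq_mul_denom_of_eq_div hq hf)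
  rw [Polynomial.rootMultiplicity_mul (mul_ne_zero hnum hq),
    Polynomial.rootMultiplicity_mul (mul_ne_zero hp f.denom_ne_zero)] at h
  unfold ordAt
  omega

lemma ordAt_algebraMap (p : Polynomial ℂ) (z : ℂ) :
    ordAt z (algebraMap _ _ p) = rootMultiplicity z p := by
  simp [ordAt, RatFunc.num_algebraMap, RatFunc.denom_algebraMap]

lemma ordAt_C (c z : ℂ) : ordAt z (RatFunc.C c) = 0 := by
  rw [← RatFunc.algebraMap_C, ordAt_algebraMap,
    Polynomial.rootMultiplicity_C]
  rfl

lemma ordAt_mul {f h : RatFunc ℂ} (hf : f ≠ 0) (hh : h ≠ 0) (z : ℂ) :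
    ordAt z (f * h) = ordAt z f + ordAt z h := by
  have hnum := mul_ne_zero (RatFunc.num_ne_zero hf) (RatFunc.num_ne_zero hh)
  have hden := mul_ne_zero f.denom_ne_zero h.denom_ne_zero
  have hrep : f * h = algebraMap _ _ (f.num * h.num) / algebraMap _ _ (f.denom * h.denom) := by
    rw [map_mul, map_mul, ← div_mul_div_comm, RatFunc.num_div_denom, RatFunc.num_div_denom]
  rw [ordAt_eq_of_eq_div hnum hden hrep z, Polynomial.rootMultiplicity_mul hnum,
    Polynomial.rootMultiplicity_mul hden, ordAt, ordAt]
  push_cast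
  ring

lemma ordAt_div {f h : RatFunc ℂ} (hf : f ≠ 0) (hh : h ≠ 0) (z : ℂ) :
    ordAt z (f / h) = ordAt z f - ordAt z h := by
  have := ordAt_mul (div_ne_zero hf hh) hh z
  rw [div_mul_cancel₀ _ hh] at this
  omega

lemma ordAt_inv {f : RatFunc ℂ} (hf : f ≠ 0) (z : ℂ) : ordAt z f⁻¹ = -ordAt z f := by
  rw [inv_eq_one_div, ordAt_div one_ne_zero hf, ← map_one RatFunc.C, ordAt_C 1,
    zero_sub]

lemma ordAt_multiset_prod (z : ℂ) {M : Multiset (RatFunc ℂ)} (hM : (0 : RatFunc ℂ) ∉ M) :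
    ordAt z M.prod = (M.map (ordAt z)).sum := by
  induction M using Multiset.induction with
  | empty => simpa using ordAt_C 1 z
  | cons a M ih =>
    rw [Multiset.mem_cons, not_or] at hM
    rw [Multiset.prod_cons, ordAt_mul (Ne.symm hM.1) (Multiset.prod_ne_zero hM.2),
      ih hM.2, Multiset.map_cons, Multiset.sum_cons]

lemma ordAt_sub_C {f : RatFunc ℂ} (hf : Nonconst f) (c z : ℂ) :
    ordAt z (f - RatFunc.C c) =
      (rootMultiplicity z (f.num - Polynomial.C c * f.denom) : ℤ) -
        rootMultiplicity z f.denom := by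
  refine ordAt_eq_of_eq_div (hf.num_sub_C_mul_denom_ne_zero c) f.denom_ne_zero ?_ z
  rw [map_sub, map_mul, RatFunc.algebraMap_C, sub_div,
    mul_div_cancel_right₀ _ (by simpa using f.denom_ne_zero), RatFunc.num_div_denom]

lemma eval_denom_eq_zero_iff_ordAt_neg (f : RatFunc ℂ) (z : ℂ) :
    f.denom.eval z = 0 ↔ ordAt z f < 0 := by
  rw [ordAt]
  constructor
  · intro h
    have h1 := (Polynomial.rootMultiplicity_pos f.denom_ne_zero).mpr h
    rw [Polynomial.rootMultiplicity_eq_zero (eval_num_ne_zero_of_eval_denom_eq_zero h)]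
    omega
  · intro h
    by_contra hne
    rw [Polynomial.rootMultiplicity_eq_zero hne] at h
    omega

lemma evalF_eq_infty_iff (f : RatFunc ℂ) (z : ℂ) : evalF f z = ∞ ↔ ordAt z f < 0 := by
  rw [← eval_denom_eq_zero_iff_ordAt_neg, evalF]
  split_ifs with h <;> simp [h]

lemma evalF_of_eval_denom_ne_zero {f : RatFunc ℂ} {z : ℂ} (h : f.denom.eval z ≠ 0) :
    evalF f z = ((f.num.eval z / f.denom.eval z : ℂ) : OnePoint ℂ) := if_neg h

lemma rootMultiplicity_num_sub_C_mul_denom {f : RatFunc ℂ} {z : ℂ} (hf : Nonconst f)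
    (h : f.denom.eval z ≠ 0) (c : ℂ) :
    0 < rootMultiplicity z (f.num - Polynomial.C c * f.denom) ↔
      f.num.eval z / f.denom.eval z = c := by
  rw [Polynomial.rootMultiplicity_pos (hf.num_sub_C_mul_denom_ne_zero c), div_eq_iff h]
  simp [sub_eq_zero]

lemma evalF_eq_coe_iff {f : RatFunc ℂ} (hf : Nonconst f) (z c : ℂ) :
    evalF f z = (c : OnePoint ℂ) ↔ 0 < ordAt z (f - RatFunc.C c) := by
  rw [ordAt_sub_C hf]
  by_cases h : f.denom.eval z = 0
  · have hP : rootMultiplicity z (f.num - Polynomial.C c * f.denom) = 0 :=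
      Polynomial.rootMultiplicity_eq_zero (by simpa [h] using
        eval_num_ne_zero_of_eval_denom_eq_zero h)
    have hden := (Polynomial.rootMultiplicity_pos f.denom_ne_zero).mpr h
    simp only [evalF, if_pos h, OnePoint.infty_ne_coe, false_iff]
    omega
  · rw [evalF_of_eval_denom_ne_zero h, OnePoint.coe_eq_coe,
      ← rootMultiplicity_num_sub_C_mul_denom hf h, Polynomial.rootMultiplicity_eq_zero h]
    omega

lemma locDegF_of_eval_denom_eq_zero {f : RatFunc ℂ} {z : ℂ} (h : f.denom.eval z = 0) :
    (locDegF f z : ℤ) = -ordAt z f := by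
  rw [locDegF, if_pos h, ordAt,
    Polynomial.rootMultiplicity_eq_zero (eval_num_ne_zero_of_eval_denom_eq_zero h)]
  omega

lemma locDegF_of_evalF_eq_coe {f : RatFunc ℂ} (hf : Nonconst f) {z c : ℂ}
    (h : evalF f z = (c : OnePoint ℂ)) : (locDegF f z : ℤ) = ordAt z (f - RatFunc.C c) := by
  have hden : f.denom.eval z ≠ 0 := fun h0 => by simp [evalF, h0] at h
  rw [evalF_of_eval_denom_ne_zero hden, OnePoint.coe_eq_coe] at h
  rw [ordAt_sub_C hf, locDegF, if_neg hden, h, Polynomial.rootMultiplicity_eq_zero hden]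
  omega

/-- The order of vanishing on `ℂP¹`; at `∞` it is measured in the coordinate `1 / X`. -/
def ordOP (u : RatFunc ℂ) : OnePoint ℂ → ℤ :=
  OnePoint.rec (-u.intDegree) (fun z => ordAt z u)

@[simp] lemma ordOP_coe (u : RatFunc ℂ) (z : ℂ) : ordOP u z = ordAt z u := rfl

@[simp] lemma ordOP_infty (u : RatFunc ℂ) : ordOP u ∞ = -u.intDegree := rfl

lemma ordAt_aeval {g : RatFunc ℂ} (hg : Nonconst g) {p : Polynomial ℂ} (hp : p ≠ 0) (z : ℂ) :
    ordAt z (Polynomial.aeval g p) = (p.roots.map fun a => ordAt z (g - RatFunc.C a)).sum := by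
  have hprod : (0 : RatFunc ℂ) ∉ p.roots.map (fun a => g - RatFunc.C a) := by
    rw [Multiset.mem_map]
    rintro ⟨a, -, ha⟩
    exact hg.sub_C_ne_zero a ha
  have hlc : p.leadingCoeff ≠ 0 := leadingCoeff_ne_zero.mpr hp
  rw [aeval_eq_C_mul_prod g, ordAt_mul (by simpa using hlc) (Multiset.prod_ne_zero hprod),
    ordAt_C _ z, ordAt_multiset_prod z hprod, Multiset.map_map, zero_add]
  rfl

lemma ordAt_sub_C_of_eval_denom_eq_zero {g : RatFunc ℂ} (hg : Nonconst g) {z : ℂ}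
    (h : g.denom.eval z = 0) (a : ℂ) : ordAt z (g - RatFunc.C a) = -locDegF g z := by
  have hP : ¬(g.num - Polynomial.C a * g.denom).IsRoot z := by
    simpa [h] using eval_num_ne_zero_of_eval_denom_eq_zero h
  rw [ordAt_sub_C hg, Polynomial.rootMultiplicity_eq_zero hP, locDegF, if_pos h]
  simp

lemma ordAt_sub_C_of_eval_denom_ne_zero {g : RatFunc ℂ} (hg : Nonconst g) {z : ℂ}
    (h : g.denom.eval z ≠ 0) {a : ℂ} (ha : a ≠ g.num.eval z / g.denom.eval z) :
    ordAt z (g - RatFunc.C a) = 0 := by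
  rw [ordAt_sub_C hg, Polynomial.rootMultiplicity_eq_zero h,
    Nat.eq_zero_of_not_pos (mt (rootMultiplicity_num_sub_C_mul_denom hg h a).mp (Ne.symm ha))]
  simp

-- Each linear factor `g - a` of `aeval g p` has order `deg_z g` at `z` if `a = g z`, order `0`
-- if `a ≠ g z`, and order `-deg_z g` if `g z = ∞`.
lemma ordAt_compHom {g : RatFunc ℂ} (hg : Nonconst g) {u : RatFunc ℂ} (hu : u ≠ 0) (z : ℂ) :
    ordAt z (compHom hg u) = locDegF g z * ordOP u (evalF g z) := by
  have hnum : u.num ≠ 0 := RatFunc.num_ne_zero hu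
  have hrep : compHom hg u = Polynomial.aeval g u.num / Polynomial.aeval g u.denom := by
    conv_lhs => rw [← RatFunc.num_div_denom u]
    rw [map_div₀, compHom_algebraMap, compHom_algebraMap]
  rw [hrep, ordAt_div (hg.aeval_ne_zero hnum) (hg.aeval_ne_zero u.denom_ne_zero),
    ordAt_aeval hg hnum, ordAt_aeval hg u.denom_ne_zero]
  by_cases h : g.denom.eval z = 0
  · simp only [ordAt_sub_C_of_eval_denom_eq_zero hg h, Multiset.map_const',
      Multiset.sum_replicate, IsAlgClosed.card_roots_eq_natDegree, nsmul_eq_mul, evalF, if_pos h,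
      ordOP_infty, RatFunc.intDegree]
    ring
  · set v := g.num.eval z / g.denom.eval z
    have hsum : ∀ p : Polynomial ℂ,
        (p.roots.map fun a => ordAt z (g - RatFunc.C a)).sum =
          rootMultiplicity v p * locDegF g z :=
      fun p => by
        rw [Multiset.sum_map_eq_nsmul_single v fun a ha _ =>
            ordAt_sub_C_of_eval_denom_ne_zero hg h ha,
          locDegF_of_evalF_eq_coe hg (evalF_of_eval_denom_ne_zero h), Polynomial.count_roots,
          nsmul_eq_mul]
    rw [hsum, hsum, evalF_of_eval_denom_ne_zero h, ordOP_coe, ordAt]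
    ring

/-! ### Values and local degrees on `ℂP¹` -/

@[simp] lemma evalOP_coe (f : RatFunc ℂ) (z : ℂ) : evalOP f z = evalF f z := rfl

@[simp] lemma evalOP_infty (f : RatFunc ℂ) : evalOP f ∞ = evalF (flip f) 0 := rfl

@[simp] lemma locDeg_coe (f : RatFunc ℂ) (z : ℂ) : locDeg f z = locDegF f z := rfl

@[simp] lemma locDeg_infty (f : RatFunc ℂ) : locDeg f ∞ = locDegF (flip f) 0 := rfl

lemma flip_eq_compHom (f : RatFunc ℂ) : flip f = compHom nonconst_inv_X f :=
  rcomp_eq_compHom _ f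

lemma Nonconst.flip {f : RatFunc ℂ} (hf : Nonconst f) : Nonconst (flip f) := by
  rw [flip_eq_compHom]
  exact nonconst_compHom _ hf

lemma flip_sub_C (f : RatFunc ℂ) (c : ℂ) : flip (f - RatFunc.C c) = flip f - RatFunc.C c := by
  rw [flip_eq_compHom, flip_eq_compHom, compHom_sub_C]

lemma flip_X : flip RatFunc.X = (RatFunc.X : RatFunc ℂ)⁻¹ := by
  rw [flip_eq_compHom, compHom_X]

lemma ordAt_zero_inv_X : ordAt 0 (RatFunc.X : RatFunc ℂ)⁻¹ = -1 := by
  rw [ordAt_inv RatFunc.X_ne_zero, ← RatFunc.algebraMap_X, ordAt_algebraMap,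
    ← sub_zero Polynomial.X, ← map_zero Polynomial.C, Polynomial.rootMultiplicity_X_sub_C_self]
  rfl

lemma evalF_inv_X_zero : evalF (RatFunc.X : RatFunc ℂ)⁻¹ 0 = ∞ := by
  rw [evalF_eq_infty_iff, ordAt_zero_inv_X]
  norm_num

lemma locDegF_inv_X_zero : locDegF (RatFunc.X : RatFunc ℂ)⁻¹ 0 = 1 := by
  have hpole : ((RatFunc.X : RatFunc ℂ)⁻¹).denom.eval 0 = 0 := by
    rw [eval_denom_eq_zero_iff_ordAt_neg, ordAt_zero_inv_X]
    norm_num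
  have := locDegF_of_eval_denom_eq_zero hpole
  rw [ordAt_zero_inv_X] at this
  omega

lemma ordOP_infty_eq_ordAt_flip {u : RatFunc ℂ} (hu : u ≠ 0) : ordOP u ∞ = ordAt 0 (flip u) := by
  rw [flip_eq_compHom, ordAt_compHom nonconst_inv_X hu, evalF_inv_X_zero, locDegF_inv_X_zero]
  simp

lemma ordOP_compHom {g : RatFunc ℂ} (hg : Nonconst g) {u : RatFunc ℂ} (hu : u ≠ 0)
    (x : OnePoint ℂ) : ordOP (compHom hg u) x = locDeg g x * ordOP u (evalOP g x) := by
  induction x using OnePoint.rec with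
  | infty =>
    rw [ordOP_infty_eq_ordAt_flip ((_root_.map_ne_zero _).mpr hu), flip_eq_compHom,
      compHom_compHom, ordAt_compHom _ hu, locDeg_infty, evalOP_infty, flip_eq_compHom]
  | coe z => exact ordAt_compHom hg hu z

lemma evalOP_eq_infty_iff {f : RatFunc ℂ} (hf : f ≠ 0) (x : OnePoint ℂ) :
    evalOP f x = ∞ ↔ ordOP f x < 0 := by
  induction x using OnePoint.rec with
  | infty => rw [evalOP_infty, evalF_eq_infty_iff, ordOP_infty_eq_ordAt_flip hf]
  | coe z => exact evalF_eq_infty_iff f z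

lemma evalOP_eq_coe_iff {f : RatFunc ℂ} (hf : Nonconst f) (x : OnePoint ℂ) (c : ℂ) :
    evalOP f x = c ↔ 0 < ordOP (f - RatFunc.C c) x := by
  induction x using OnePoint.rec with
  | infty =>
    rw [evalOP_infty, evalF_eq_coe_iff hf.flip, ordOP_infty_eq_ordAt_flip (hf.sub_C_ne_zero c),
      flip_sub_C]
  | coe z => exact evalF_eq_coe_iff hf z c

lemma locDeg_of_evalOP_eq_infty {f : RatFunc ℂ} (hf : f ≠ 0) {x : OnePoint ℂ}
    (h : evalOP f x = ∞) : (locDeg f x : ℤ) = -ordOP f x := by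
  induction x using OnePoint.rec with
  | infty =>
    rw [evalOP_infty, evalF_eq_infty_iff, ← eval_denom_eq_zero_iff_ordAt_neg] at h
    rw [locDeg_infty, locDegF_of_eval_denom_eq_zero h, ordOP_infty_eq_ordAt_flip hf]
  | coe z =>
    rw [evalOP_coe, evalF_eq_infty_iff, ← eval_denom_eq_zero_iff_ordAt_neg] at h
    exact locDegF_of_eval_denom_eq_zero h

lemma locDeg_of_evalOP_eq_coe {f : RatFunc ℂ} (hf : Nonconst f) {x : OnePoint ℂ} {c : ℂ}
    (h : evalOP f x = c) : (locDeg f x : ℤ) = ordOP (f - RatFunc.C c) x := by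
  induction x using OnePoint.rec with
  | infty =>
    rw [locDeg_infty, locDegF_of_evalF_eq_coe hf.flip h,
      ordOP_infty_eq_ordAt_flip (hf.sub_C_ne_zero c), flip_sub_C]
  | coe z => exact locDegF_of_evalF_eq_coe hf h

lemma locDeg_pos {f : RatFunc ℂ} (hf : Nonconst f) (x : OnePoint ℂ) : 0 < locDeg f x := by
  cases hy : evalOP f x using OnePoint.rec with
  | infty =>
    have h1 := locDeg_of_evalOP_eq_infty hf.ne_zero hy
    have h2 := (evalOP_eq_infty_iff hf.ne_zero x).mp hy
    omega
  | coe c =>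
    have h1 := locDeg_of_evalOP_eq_coe hf hy
    have h2 := (evalOP_eq_coe_iff hf x c).mp hy
    omega

lemma evalOP_rcomp {f g : RatFunc ℂ} (hf : Nonconst f) (hg : Nonconst g) (x : OnePoint ℂ) :
    evalOP (rcomp f g) x = evalOP f (evalOP g x) := by
  have hdeg : (0 : ℤ) < locDeg g x := by exact_mod_cast locDeg_pos hg x
  rw [rcomp_eq_compHom hg]
  cases hy : evalOP f (evalOP g x) using OnePoint.rec with
  | infty =>
    rw [evalOP_eq_infty_iff hf.ne_zero] at hy
    rw [evalOP_eq_infty_iff ((_root_.map_ne_zero _).mpr hf.ne_zero), ordOP_compHom hg hf.ne_zero]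
    exact mul_neg_of_pos_of_neg hdeg hy
  | coe c =>
    rw [evalOP_eq_coe_iff hf] at hy
    rw [evalOP_eq_coe_iff (nonconst_compHom hg hf), ← compHom_sub_C,
      ordOP_compHom hg (hf.sub_C_ne_zero c)]
    exact mul_pos hdeg hy

lemma locDeg_rcomp {f g : RatFunc ℂ} (hf : Nonconst f) (hg : Nonconst g) (x : OnePoint ℂ) :
    locDeg (rcomp f g) x = locDeg g x * locDeg f (evalOP g x) := by
  zify
  have hev := evalOP_rcomp hf hg x
  rw [rcomp_eq_compHom hg] at hev ⊢
  cases hy : evalOP f (evalOP g x) using OnePoint.rec with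
  | infty =>
    rw [hy] at hev
    rw [locDeg_of_evalOP_eq_infty ((_root_.map_ne_zero _).mpr hf.ne_zero) hev,
      ordOP_compHom hg hf.ne_zero, locDeg_of_evalOP_eq_infty hf.ne_zero hy]
    ring
  | coe c =>
    rw [hy] at hev
    rw [locDeg_of_evalOP_eq_coe (nonconst_compHom hg hf) hev, ← compHom_sub_C,
      ordOP_compHom hg (hf.sub_C_ne_zero c), locDeg_of_evalOP_eq_coe hf hy]

lemma ordOP_inv (u : RatFunc ℂ) (x : OnePoint ℂ) : ordOP u⁻¹ x = -ordOP u x := by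
  induction x using OnePoint.rec with
  | infty => simp
  | coe z =>
    rcases eq_or_ne u 0 with rfl | hu
    · simp [ordAt]
    · exact ordAt_inv hu z

lemma evalOP_eq_infty_iff_ordOP_inv_pos {f : RatFunc ℂ} (hf : f ≠ 0) (x : OnePoint ℂ) :
    evalOP f x = ∞ ↔ 0 < ordOP f⁻¹ x := by
  rw [evalOP_eq_infty_iff hf, ordOP_inv, neg_pos]

lemma Nonconst.exists_ordOP_pos {u : RatFunc ℂ} (hu : Nonconst u) : ∃ x, 0 < ordOP u x := by
  by_cases hroot : ∃ z, u.num.IsRoot z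
  · obtain ⟨z, hz⟩ := hroot
    have hden : u.denom.eval z ≠ 0 := fun h => eval_num_ne_zero_of_eval_denom_eq_zero h hz
    have := (Polynomial.rootMultiplicity_pos (RatFunc.num_ne_zero hu.ne_zero)).mpr hz
    refine ⟨z, ?_⟩
    rw [ordOP_coe, ordAt, Polynomial.rootMultiplicity_eq_zero hden]
    omega
  · have hnum : u.num.natDegree = 0 := by
      by_contra h
      exact hroot (Complex.exists_root (Polynomial.natDegree_pos_iff_degree_pos.mp
        (Nat.pos_of_ne_zero h)))
    have hden : u.denom.natDegree ≠ 0 := by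
      intro hden
      obtain ⟨c, hc⟩ := Polynomial.natDegree_eq_zero.mp hnum
      apply hu c
      rw [← RatFunc.num_div_denom u,
        Polynomial.eq_one_of_monic_natDegree_zero (RatFunc.monic_denom u) hden, ← hc,
        RatFunc.algebraMap_C, map_one, div_one]
    refine ⟨∞, ?_⟩
    rw [ordOP_infty, RatFunc.intDegree, hnum]
    omega

lemma finite_setOf_ordOP_pos {u : RatFunc ℂ} (hu : u ≠ 0) : {x | 0 < ordOP u x}.Finite := by
  refine (((Polynomial.finite_setOfPred_isRoot (RatFunc.num_ne_zero hu)).image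
    ((↑) : ℂ → OnePoint ℂ)).insert ∞).subset fun x hx => ?_
  induction x using OnePoint.rec with
  | infty => exact Set.mem_insert _ _
  | coe z =>
    refine Set.mem_insert_of_mem _ ⟨z, ?_, rfl⟩
    have : 0 < rootMultiplicity z u.num := by
      simp only [Set.mem_ofPred_eq, ordOP_coe, ordAt] at hx
      omega
    exact (Polynomial.rootMultiplicity_pos (RatFunc.num_ne_zero hu)).mp this

lemma evalOP_surjective {f : RatFunc ℂ} (hf : Nonconst f) : Function.Surjective (evalOP f) := by
  intro y
  induction y using OnePoint.rec with
  | infty =>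
    obtain ⟨x, hx⟩ := hf.inv.exists_ordOP_pos
    exact ⟨x, (evalOP_eq_infty_iff_ordOP_inv_pos hf.ne_zero x).mpr hx⟩
  | coe c =>
    obtain ⟨x, hx⟩ := (hf.sub_C c).exists_ordOP_pos
    exact ⟨x, (evalOP_eq_coe_iff hf x c).mpr hx⟩

lemma finite_evalOP_preimage_singleton {f : RatFunc ℂ} (hf : Nonconst f) (y : OnePoint ℂ) :
    (evalOP f ⁻¹' {y}).Finite := by
  induction y using OnePoint.rec with
  | infty =>
    exact (finite_setOf_ordOP_pos (inv_ne_zero hf.ne_zero)).subset fun x hx =>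
      (evalOP_eq_infty_iff_ordOP_inv_pos hf.ne_zero x).mp hx
  | coe c =>
    exact (finite_setOf_ordOP_pos (hf.sub_C_ne_zero c)).subset fun x hx =>
      (evalOP_eq_coe_iff hf x c).mp hx

lemma evalOP_X (x : OnePoint ℂ) : evalOP RatFunc.X x = x := by
  induction x using OnePoint.rec with
  | infty => rw [evalOP_infty, flip_X, evalF_inv_X_zero]
  | coe z => simp [evalF, RatFunc.num_X, RatFunc.denom_X]

lemma locDeg_X (x : OnePoint ℂ) : locDeg RatFunc.X x = 1 := by
  induction x using OnePoint.rec with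
  | infty => rw [locDeg_infty, flip_X, locDegF_inv_X_zero]
  | coe z =>
    simp [locDegF, RatFunc.num_X, RatFunc.denom_X, Polynomial.rootMultiplicity_X_sub_C_self]

lemma nonconst_riter {A : RatFunc ℂ} (hA : Nonconst A) (n : ℕ) : Nonconst (riter A n) := by
  induction n with
  | zero => exact nonconst_X
  | succ n ih => exact hA.rcomp ih

lemma riter_add {A : RatFunc ℂ} (hA : Nonconst A) (m n : ℕ) :
    riter A (m + n) = rcomp (riter A m) (riter A n) := by
  induction m with
  | zero => rw [Nat.zero_add, riter, X_rcomp (nonconst_riter hA n)]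
  | succ m ih =>
    rw [Nat.succ_add, riter, ih, riter,
      rcomp_assoc A (nonconst_riter hA m) (nonconst_riter hA n)]

/-! ### Orbifold coverings -/

lemma lcm_range_succ_eq_of_eq {α : Type*} [CommMonoidWithZero α] [NormalizedGCDMonoid α]
    (g : ℕ → α) {l : ℕ} (hg : g l = g 0) :
    (Finset.range l).lcm (fun j => g (j + 1)) = (Finset.range l).lcm g := by
  cases l with
  | zero => rfl
  | succ n =>
    have h₀ :
        (Finset.range (n + 2)).lcm g = lcm (g 0) ((Finset.range (n + 1)).lcm (g <| · + 1)) := by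
      rw [Finset.range_add_one' (n + 1), Finset.lcm_insert, Finset.map_eq_image, Finset.lcm_image]
      rfl
    have h₁ : (Finset.range (n + 2)).lcm g = lcm (g (n + 1)) ((Finset.range (n + 1)).lcm g) := by
      rw [Finset.range_add_one, Finset.lcm_insert]
    have h₂ : g 0 ∣ (Finset.range (n + 1)).lcm (g <| · + 1) :=
      hg ▸ Finset.dvd_lcm (Finset.self_mem_range_succ n)
    have h₃ : g (n + 1) ∣ (Finset.range (n + 1)).lcm g :=
      hg.symm ▸ Finset.dvd_lcm (Finset.mem_range.mpr n.succ_pos)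
    rw [← (lcm_eq_right_iff _ _ Finset.normalize_lcm).mpr h₂, ← h₀, h₁,
      (lcm_eq_right_iff _ _ Finset.normalize_lcm).mpr h₃]

lemma finset_lcm_mul_right {ι : Type*} {s : Finset ι} (hs : s.Nonempty) (f : ι → ℕ) (d : ℕ) :
    s.lcm (fun i => f i * d) = s.lcm f * d := by
  induction hs using Finset.Nonempty.cons_induction with
  | singleton i => simp
  | cons i s hi hs ih =>
    rw [Finset.cons_eq_insert, Finset.lcm_insert, Finset.lcm_insert, ih, lcm_mul_right,
      normalize_eq]

lemma Orbifold.ext {O O' : Orbifold} (h : O.nu = O'.nu) : O = O' := by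
  cases O
  cases O'
  congr

def Orbifold.lcm {ι : Type*} (s : Finset ι) (O : ι → Orbifold) : Orbifold where
  nu z := s.lcm fun i => (O i).nu z
  one_le z := Nat.pos_of_ne_zero <| Finset.lcm_ne_zero_iff.mpr fun i _ =>
    Nat.pos_iff_ne_zero.mp ((O i).one_le z)
  finite := by
    refine (s.finite_toSet.biUnion fun i _ => (O i).finite).subset fun z hz => ?_
    by_contra hcon
    simp only [Set.mem_iUnion, Set.mem_ofPred_eq, not_exists, not_not] at hcon
    exact hz (Nat.dvd_one.mp (Finset.lcm_dvd fun i hi => (hcon i hi).symm ▸ dvd_rfl))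

lemma Orbifold.lcm_range_succ {O : ℕ → Orbifold} {l : ℕ} (hO : O l = O 0) :
    Orbifold.lcm (Finset.range l) (fun j => O (j + 1)) = Orbifold.lcm (Finset.range l) O :=
  Orbifold.ext <| funext fun z => lcm_range_succ_eq_of_eq (fun j => (O j).nu z) (by rw [hO])

lemma Orbifold.IsNontrivial.lcm {ι : Type*} {s : Finset ι} {O : ι → Orbifold} {i : ι}
    (hi : i ∈ s) (hO : (O i).IsNontrivial) : (Orbifold.lcm s O).IsNontrivial := by
  obtain ⟨z, hz⟩ := hO
  exact ⟨z, hz.trans_le (Nat.le_of_dvd ((Orbifold.lcm s O).one_le z) (Finset.dvd_lcm hi))⟩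

lemma IsCovering.lcm {A : RatFunc ℂ} {ι : Type*} {s : Finset ι} (hs : s.Nonempty)
    {O O' : ι → Orbifold} (h : ∀ i ∈ s, IsCovering A (O i) (O' i)) :
    IsCovering A (Orbifold.lcm s O) (Orbifold.lcm s O') := fun x => by
  simp only [Orbifold.lcm]
  rw [← finset_lcm_mul_right hs]
  exact Finset.lcm_congr rfl fun i hi => h i hi x

lemma isCovering_X (O : Orbifold) : IsCovering RatFunc.X O O := fun x => by
  rw [evalOP_X, locDeg_X, mul_one]

lemma IsCovering.unique {B : RatFunc ℂ} (hB : Nonconst B) {O₁ O₂ O₃ : Orbifold}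
    (h₂ : IsCovering B O₁ O₂) (h₃ : IsCovering B O₁ O₃) : O₂ = O₃ :=
  Orbifold.ext <| funext fun y => by
    obtain ⟨x, rfl⟩ := evalOP_surjective hB y
    rw [h₂ x, h₃ x]

lemma IsCovering.of_rcomp {A B : RatFunc ℂ} (hA : Nonconst A) (hB : Nonconst B)
    {O₁ O₂ O₃ : Orbifold} (hB₁₂ : IsCovering B O₁ O₂) (h : IsCovering (rcomp A B) O₁ O₃) :
    IsCovering A O₂ O₃ := fun y => by
  obtain ⟨x, rfl⟩ := evalOP_surjective hB y
  rw [← evalOP_rcomp hA hB, h x, locDeg_rcomp hA hB, ← mul_assoc, hB₁₂ x]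

lemma IsCovering.exists_factor {A B : RatFunc ℂ} (hA : Nonconst A) (hB : Nonconst B)
    {O₁ O₃ : Orbifold} (h : IsCovering (rcomp A B) O₁ O₃) :
    ∃ O₂, IsCovering B O₁ O₂ ∧ IsCovering A O₂ O₃ := by
  have h' : ∀ x, O₃.nu (evalOP A (evalOP B x)) =
      O₁.nu x * locDeg B x * locDeg A (evalOP B x) := fun x => by
    rw [← evalOP_rcomp hA hB, h x, locDeg_rcomp hA hB, mul_assoc]
  have fiber_const : ∀ x x', evalOP B x = evalOP B x' →
      O₁.nu x * locDeg B x = O₁.nu x' * locDeg B x' := fun x x' hx =>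
    Nat.eq_of_mul_eq_mul_right (locDeg_pos hA (evalOP B x')) (by rw [← h' x', ← hx, ← h' x])
  have hsurj := evalOP_surjective hB
  set pre := Function.surjInv hsurj
  set ν : OnePoint ℂ → ℕ := fun y => O₁.nu (pre y) * locDeg B (pre y)
  have hν : ∀ y, O₃.nu (evalOP A y) = ν y * locDeg A y := fun y => by
    have := h' (pre y)
    rwa [Function.surjInv_eq hsurj y] at this
  have hν_pos : ∀ y, 1 ≤ ν y := fun y =>
    Nat.one_le_iff_ne_zero.mpr
      (mul_ne_zero (Nat.one_le_iff_ne_zero.mp (O₁.one_le _)) (locDeg_pos hB _).ne')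
  refine ⟨⟨ν, hν_pos, ?_⟩, fun x => fiber_const _ _ (Function.surjInv_eq hsurj _), hν⟩
  refine (O₃.finite.preimage' fun b _ => finite_evalOP_preimage_singleton hA b).subset
    fun y hy => ?_
  rw [Set.mem_preimage, Set.mem_ofPred_eq, hν]
  exact fun h1 => hy (Nat.eq_one_of_mul_eq_one_right h1)

/-- **Corollary.** If some iterate `A^{∘l}` (`l ≥ 1`) of a rational map `A` of degree at
least two is a Lattès map, then `A` is a Lattès map. -/
theorem lattes_iterate (A : RatFunc ℂ) (hA : 2 ≤ rdeg A) (l : ℕ) (hl : 1 ≤ l)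
    (h : IsLattes (riter A l)) : IsLattes A := by
  obtain ⟨-, O, hO, hcov⟩ := h
  have hAnc := nonconst_of_two_le_rdeg hA
  have hiter := nonconst_riter hAnc
  have : Nonempty Orbifold := ⟨O⟩
  choose! P hP using fun j (hj : j ≤ l) => by
    rw [← Nat.sub_add_cancel hj, riter_add hAnc] at hcov
    exact (hcov.exists_factor (hiter (l - j)) (hiter j)).imp fun _ => And.left
  have hP₀ : P 0 = O := (hP 0 l.zero_le).unique nonconst_X (isCovering_X O)
  have hPl : P l = O := (hP l le_rfl).unique (hiter l) hcov
  have hstep : ∀ j ∈ Finset.range l, IsCovering A (P j) (P (j + 1)) := fun j hj =>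
    (hP j (Finset.mem_range.mp hj).le).of_rcomp hAnc (hiter j)
      (hP (j + 1) (Finset.mem_range.mp hj))
  refine ⟨hA, Orbifold.lcm (Finset.range l) P,
    (hP₀ ▸ hO).lcm (Finset.mem_range.mpr hl), ?_⟩
  have := IsCovering.lcm (Finset.nonempty_range_iff.mpr (by omega)) hstep
  rwa [Orbifold.lcm_range_succ (hPl.trans hP₀.symm)] at this

end GenLattes
end
end

section
/- Let n ≥ 2, let ζ be a primitive n-th root of unity in ℂ, and let A, F ∈ ℂ(X) be nonconstant rational functions with A(X^n) = F(X)^n and F(ζX) = ζ^r · F(X) for some integer r with gcd(r, n) = 1. Set m = deg F (which equals deg A). Then m ≥ n, unless there exists c ∈ ℂ, c ≠ 0, such that either F = c·X^m and A = c^n·X^m, or F = c·X^{−m} and A = c^n·X^{−m}. -/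
open Polynomial OnePoint
open scoped Classical

noncomputable section

/-!
Write `F = P / Q` in lowest terms. The relation `F(ζX) = ζ^r F(X)` and coprimality give
`P ∣ P(ζX)` and `Q ∣ Q(ζX)`; comparing degrees, `P(ζX) = c P` for a constant `c`, so
`ζ^k = c` for every exponent `k` occurring in `P`. When `deg F < n` these exponents lie below
`n` and are congruent modulo `n`, so `P` is a monomial, and likewise `Q`. Being coprime, one
of them is constant, so `F = c X^{±m}`. Finally `A` is read off from `A(X^n) = F^n`, because
substituting `X^n` is a field homomorphism of `ℂ(X)`, hence injective.
-/

theorem IsCoprime.dvd_and_dvd_of_mul_eq_mul {R : Type*} [CommRing R] {a b a' b' u : R}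
    (hab : IsCoprime a b) (hu : IsUnit u) (h : a' * b = u * a * b') : a ∣ a' ∧ b ∣ b' :=
  ⟨hab.dvd_of_dvd_mul_right ⟨u * b', by rw [h]; ring⟩,
    hu.dvd_mul_left.mp (hab.symm.dvd_of_dvd_mul_right ⟨a', by linear_combination -h⟩)⟩

open scoped Finset

namespace GenLattes

variable {K : Type*} [Field K]

theorem exists_comp_C_mul_X_eq_C_mul_of_dvd {p : K[X]} {a : K} (ha : a ≠ 0)
    (h : p ∣ p.comp (C a * X)) : ∃ c, p.comp (C a * X) = C c * p := by
  rcases eq_or_ne p 0 with rfl | hp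
  · exact ⟨0, by simp⟩
  obtain ⟨k, hk⟩ := h
  have hk0 : k ≠ 0 := by
    rintro rfl
    rw [mul_zero, comp_C_mul_X_eq_zero_iff (mem_nonZeroDivisors_of_ne_zero ha)] at hk
    exact hp hk
  have hdeg : p.natDegree + k.natDegree = p.natDegree := by
    rw [← natDegree_mul hp hk0, ← hk, natDegree_comp, natDegree_C_mul_X a ha, mul_one]
  refine ⟨k.coeff 0, ?_⟩
  rw [hk, ← eq_C_of_natDegree_eq_zero (by omega : k.natDegree = 0), mul_comm]

theorem card_support_le_one_of_comp_C_mul_X_eq {p : K[X]} {ζ c : K} {n : ℕ}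
    (hζ : IsPrimitiveRoot ζ n) (hp : p.natDegree < n) (h : p.comp (C ζ * X) = C c * p) :
    #p.support ≤ 1 := by
  have hpow : ∀ i ∈ p.support, ζ ^ i = c := fun i hi => by
    have hi' := congrArg (coeff · i) h
    simp only [comp_C_mul_X_coeff, coeff_C_mul] at hi'
    exact mul_left_cancel₀ (mem_support_iff.mp hi) (hi'.trans (mul_comm _ _))
  refine Finset.card_le_one.mpr fun i hi j hj =>
    hζ.pow_inj ?_ ?_ ((hpow i hi).trans (hpow j hj).symm)
  · exact (le_natDegree_of_mem_supp i hi).trans_lt hp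
  · exact (le_natDegree_of_mem_supp j hj).trans_lt hp

theorem card_support_le_one_of_dvd_comp_C_mul_X {p : K[X]} {ζ : K} {n : ℕ}
    (hζ : IsPrimitiveRoot ζ n) (hp : p.natDegree < n) (h : p ∣ p.comp (C ζ * X)) :
    #p.support ≤ 1 :=
  have ⟨_, hc⟩ := exists_comp_C_mul_X_eq_C_mul_of_dvd (hζ.ne_zero (by omega)) h
  card_support_le_one_of_comp_C_mul_X_eq hζ hp hc

theorem natDegree_eq_zero_or_of_isCoprime {p q : K[X]} (hpq : IsCoprime p q)
    (hp : #p.support ≤ 1) (hq : #q.support ≤ 1) : p.natDegree = 0 ∨ q.natDegree = 0 := by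
  by_contra! hpq0
  have hX_dvd : ∀ f : K[X], #f.support ≤ 1 → f.natDegree ≠ 0 → X ∣ f := by
    intro f hf hf0
    rw [← C_mul_X_pow_eq_self hf]
    exact dvd_mul_of_dvd_right (dvd_pow_self X hf0) _
  exact not_isUnit_X (hpq.isUnit_of_dvd' (hX_dvd p hp hpq0.1) (hX_dvd q hq hpq0.2))

theorem comp_eq_zero_iff_of_natDegree_pos {p s : K[X]} (hs : 0 < s.natDegree) :
    p.comp s = 0 ↔ p = 0 := by
  refine ⟨fun hp => ?_, fun hp => by rw [hp, zero_comp]⟩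
  rcases comp_eq_zero_iff.mp hp with hp | ⟨-, hs'⟩
  · exact hp
  · rw [hs', natDegree_C] at hs
    exact absurd hs (lt_irrefl 0)

def compAlgHom (s : K[X]) (hs : 0 < s.natDegree) : RatFunc K →ₐ[K] RatFunc K :=
  RatFunc.liftAlgHom ((IsScalarTower.toAlgHom K K[X] (RatFunc K)).comp (aeval s))
    (nonZeroDivisors_le_comap_nonZeroDivisors_of_injective _
      ((RatFunc.algebraMap_injective K).comp <| (injective_iff_map_eq_zero _).mpr fun _ hp =>
        (comp_eq_zero_iff_of_natDegree_pos hs).mp (by rwa [comp_eq_aeval])))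

theorem compAlgHom_algebraMap (s : K[X]) (hs : 0 < s.natDegree) (p : K[X]) :
    compAlgHom s hs (algebraMap K[X] (RatFunc K) p) = algebraMap K[X] (RatFunc K) (p.comp s) := by
  simp [compAlgHom, RatFunc.liftAlgHom_apply, comp_eq_aeval]

theorem compAlgHom_X (s : K[X]) (hs : 0 < s.natDegree) :
    compAlgHom s hs RatFunc.X = algebraMap K[X] (RatFunc K) s := by
  rw [← RatFunc.algebraMap_X, compAlgHom_algebraMap, X_comp]

theorem num_comp_mul_denom_eq_of_compAlgHom_eq {s : K[X]} (hs : 0 < s.natDegree)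
    {F : RatFunc K} {u : K} (h : compAlgHom s hs F = RatFunc.C u * F) :
    F.num.comp s * F.denom = C u * F.num * F.denom.comp s := by
  have hden : algebraMap K[X] (RatFunc K) (F.denom.comp s) ≠ 0 :=
    RatFunc.algebraMap_ne_zero ((comp_eq_zero_iff_of_natDegree_pos hs).not.mpr F.denom_ne_zero)
  rw [← RatFunc.num_div_denom F, map_div₀, compAlgHom_algebraMap, compAlgHom_algebraMap,
    ← RatFunc.algebraMap_C, ← mul_div_assoc, div_eq_div_iff hden
      (RatFunc.algebraMap_ne_zero F.denom_ne_zero), ← map_mul, ← map_mul, ← map_mul] at h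
  exact RatFunc.algebraMap_injective K h

theorem rcomp_algebraMap (f : RatFunc ℂ) (s : ℂ[X]) (hs : 0 < s.natDegree) :
    rcomp f (algebraMap ℂ[X] (RatFunc ℂ) s) = compAlgHom s hs f := by
  simp [rcomp, compAlgHom, RatFunc.liftAlgHom_apply, aeval_algebraMap_apply]

theorem card_support_num_denom_le_one {F : RatFunc ℂ} {ζ u : ℂ} {n : ℕ}
    (hζ : IsPrimitiveRoot ζ n) (hF : rdeg F < n) (hu : u ≠ 0)
    (h : rcomp F (RatFunc.C ζ * RatFunc.X) = RatFunc.C u * F) :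
    #F.num.support ≤ 1 ∧ #F.denom.support ≤ 1 := by
  have hs : 0 < (C ζ * X : ℂ[X]).natDegree := by
    rw [natDegree_C_mul_X _ (hζ.ne_zero (by omega))]
    exact one_pos
  have hζX : RatFunc.C ζ * RatFunc.X = algebraMap ℂ[X] (RatFunc ℂ) (C ζ * X) := by
    rw [map_mul, RatFunc.algebraMap_C, RatFunc.algebraMap_X]
  rw [hζX, rcomp_algebraMap _ _ hs] at h
  obtain ⟨hnum, hdenom⟩ := IsCoprime.dvd_and_dvd_of_mul_eq_mul
    F.isCoprime_num_denom (isUnit_C.mpr hu.isUnit) (num_comp_mul_denom_eq_of_compAlgHom_eq hs h)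
  exact ⟨card_support_le_one_of_dvd_comp_C_mul_X hζ ((le_max_left _ _).trans_lt hF) hnum,
    card_support_le_one_of_dvd_comp_C_mul_X hζ ((le_max_right _ _).trans_lt hF) hdenom⟩

theorem exists_eq_C_mul_X_pow_or_inv {F : RatFunc ℂ} (hF : F ≠ 0)
    (hnum : #F.num.support ≤ 1) (hdenom : #F.denom.support ≤ 1) :
    ∃ c : ℂ, c ≠ 0 ∧ (F = RatFunc.C c * RatFunc.X ^ rdeg F ∨
      F = RatFunc.C c * (RatFunc.X ^ rdeg F)⁻¹) := by
  refine ⟨F.num.leadingCoeff, leadingCoeff_ne_zero.mpr (RatFunc.num_ne_zero hF), ?_⟩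
  have hF' : F = RatFunc.C F.num.leadingCoeff * RatFunc.X ^ F.num.natDegree /
      RatFunc.X ^ F.denom.natDegree := by
    conv_lhs => rw [← RatFunc.num_div_denom F, ← C_mul_X_pow_eq_self hnum,
      ← C_mul_X_pow_eq_self hdenom]
    simp [F.monic_denom.leadingCoeff]
  rcases natDegree_eq_zero_or_of_isCoprime F.isCoprime_num_denom hnum hdenom with h | h
  · right
    rw [show rdeg F = F.denom.natDegree by simp [rdeg, h]]
    exact hF'.trans (by rw [h, pow_zero, mul_one, div_eq_mul_inv])
  · left
    rw [show rdeg F = F.num.natDegree by simp [rdeg, h]]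
    exact hF'.trans (by rw [h, pow_zero, div_one])

theorem rcomp_X_pow {n : ℕ} (hn : n ≠ 0) (f : RatFunc ℂ) :
    rcomp f (RatFunc.X ^ n) = compAlgHom (X ^ n) (by rw [natDegree_X_pow]; omega) f := by
  rw [← rcomp_algebraMap, map_pow, RatFunc.algebraMap_X]

theorem rcomp_X_pow_injective {n : ℕ} (hn : n ≠ 0) :
    Function.Injective fun f : RatFunc ℂ => rcomp f (RatFunc.X ^ n) := by
  simp only [rcomp_X_pow hn]
  exact RingHom.injective _

theorem rcomp_X_pow_X_pow (d : ℕ) {n : ℕ} (hn : n ≠ 0) :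
    rcomp (RatFunc.X ^ d) (RatFunc.X ^ n) = (RatFunc.X ^ d) ^ n := by
  rw [rcomp_X_pow hn, map_pow, compAlgHom_X, map_pow, RatFunc.algebraMap_X, ← pow_mul,
    ← pow_mul, mul_comm]

theorem rcomp_inv_X_pow_X_pow (d : ℕ) {n : ℕ} (hn : n ≠ 0) :
    rcomp (RatFunc.X ^ d)⁻¹ (RatFunc.X ^ n) = ((RatFunc.X ^ d)⁻¹) ^ n := by
  rw [rcomp_X_pow hn, map_inv₀, ← rcomp_X_pow hn, rcomp_X_pow_X_pow d hn, inv_pow]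

theorem eq_C_pow_mul_of_rcomp_X_pow_eq {n : ℕ} (hn : n ≠ 0) {A G : RatFunc ℂ} {c : ℂ}
    (hG : rcomp G (RatFunc.X ^ n) = G ^ n) (h : rcomp A (RatFunc.X ^ n) = (RatFunc.C c * G) ^ n) :
    A = RatFunc.C (c ^ n) * G := by
  rw [rcomp_X_pow hn] at hG
  apply rcomp_X_pow_injective hn
  simp only
  rw [h, rcomp_X_pow hn, map_mul, hG, ← RatFunc.algebraMap_eq_C,
    AlgHom.commutes, map_pow, mul_pow]

theorem degree_bound_power_general (n : ℕ) (ζ : ℂ) (hζ : IsPrimitiveRoot ζ n)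
    (A F : RatFunc ℂ) (hF : 1 ≤ rdeg F)
    (h1 : rcomp A (RatFunc.X ^ n) = F ^ n)
    (r : ℤ)
    (h2 : rcomp F (RatFunc.C ζ * RatFunc.X) = RatFunc.C (ζ ^ r) * F) :
    n ≤ rdeg F ∨
      ∃ c : ℂ, c ≠ 0 ∧
        ((F = RatFunc.C c * RatFunc.X ^ rdeg F ∧
            A = RatFunc.C (c ^ n) * RatFunc.X ^ rdeg F) ∨
         (F = RatFunc.C c * (RatFunc.X ^ rdeg F)⁻¹ ∧
            A = RatFunc.C (c ^ n) * (RatFunc.X ^ rdeg F)⁻¹)) := by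
  refine or_iff_not_imp_left.mpr fun hFn => ?_
  have hn : n ≠ 0 := by omega
  have hF0 : F ≠ 0 := by
    rintro rfl
    simp [rdeg] at hF
  obtain ⟨hnum, hdenom⟩ := card_support_num_denom_le_one hζ (not_le.mp hFn)
    (zpow_ne_zero r (hζ.ne_zero hn)) h2
  obtain ⟨c, hc, hFc | hFc⟩ := exists_eq_C_mul_X_pow_or_inv hF0 hnum hdenom <;> rw [hFc] at h1
  · exact ⟨c, hc, .inl ⟨hFc,
      eq_C_pow_mul_of_rcomp_X_pow_eq hn (rcomp_X_pow_X_pow _ hn) h1⟩⟩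
  · exact ⟨c, hc, .inr ⟨hFc,
      eq_C_pow_mul_of_rcomp_X_pow_eq hn (rcomp_inv_X_pow_X_pow _ hn) h1⟩⟩

/-- **Corollary (degree bound for good solutions of `A ∘ z^n = z^n ∘ F`).** With
`m = deg F`, one has `m ≥ n` unless `F = c X^{±m}` and `A = c^n X^{±m}` for some
`c ≠ 0`. -/
theorem degree_bound_power (n : ℕ) (hn : 2 ≤ n) (ζ : ℂ) (hζ : IsPrimitiveRoot ζ n)
    (A F : RatFunc ℂ) (hA : 1 ≤ rdeg A) (hF : 1 ≤ rdeg F)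
    (h1 : rcomp A (RatFunc.X ^ n) = F ^ n)
    (r : ℤ) (hr : Int.gcd r n = 1)
    (h2 : rcomp F (RatFunc.C ζ * RatFunc.X) = RatFunc.C (ζ ^ r) * F) :
    n ≤ rdeg F ∨
      ∃ c : ℂ, c ≠ 0 ∧
        ((F = RatFunc.C c * RatFunc.X ^ rdeg F ∧
            A = RatFunc.C (c ^ n) * RatFunc.X ^ rdeg F) ∨
         (F = RatFunc.C c * (RatFunc.X ^ rdeg F)⁻¹ ∧
            A = RatFunc.C (c ^ n) * (RatFunc.X ^ rdeg F)⁻¹)) :=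
  degree_bound_power_general n ζ hζ A F hF h1 r h2

end GenLattes
end
end

section
/- Let n > 2 and let ζ be a primitive n-th root of unity in ℂ. A nonconstant rational function F ∈ ℂ(X) satisfies both: (i) F(ζX) = ζ^r · F(X) for some integer r with gcd(r, n) = 1, and (ii) F(X) · F(X⁻¹) = ζ^k for some integer k, if and only if F = ε · X^r · R(X^n) for some ε ∈ ℂ with ε^{2n} = 1, some integer r with gcd(r, n) = 1, and some R ∈ ℂ(X) with R(X) · R(X⁻¹) = 1. Moreover, in that case there exists a (necessarily unique) rational function A ∈ ℂ(X) with A((X^n + X^{−n})/2) = (F(X)^n + F(X)^{−n})/2, and this A satisfies A((X + X⁻¹)/2) = ε^n · (G(X) + G(X)⁻¹)/2, where G = X^r · R(X)^n. -/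
/-!
The substitutions `σ : X ↦ ζX` and `τ : X ↦ X⁻¹` generate groups of order `n` and `2` of
automorphisms of `ℂ(X)`. By Artin's theorem their fixed fields have index `n` and `2`; they
contain `ℂ(Xⁿ)` and `ℂ((X + X⁻¹)/2)`, whose indices are at most `n` and `2` by the degree formula
`[ℂ(X) : ℂ(f)] = deg f`, so these are the fixed fields.

Condition (i) says that `X⁻ʳ F` is `σ`-invariant, i.e. `F = Xʳ S(Xⁿ)`. Condition (ii) then reads
`S(X) S(X⁻¹) = ζᵏ`, and dividing `S` by a square root `ε` of `ζᵏ` gives `R`. For the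
semiconjugacy, `G = Xʳ Rⁿ` satisfies `G(X⁻¹) = G⁻¹`, so `εⁿ (G + G⁻¹)/2` is `τ`-invariant and
equals `A((X + X⁻¹)/2)` for some `A`; substituting `X ↦ Xⁿ` and using `Fⁿ = εⁿ G(Xⁿ)` and
`εⁿ = ε⁻ⁿ` gives `A((Xⁿ + X⁻ⁿ)/2) = (Fⁿ + F⁻ⁿ)/2`. Uniqueness holds because substituting a
nonconstant rational function is injective.
-/

open Polynomial OnePoint
open scoped Classical

noncomputable section

open IntermediateField

namespace RatFunc

variable {K : Type*} [Field K]

theorem algHom_apply {L : Type*} [Field L] [Algebra K L] (φ : RatFunc K →ₐ[K] L)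
    (F : RatFunc K) : φ F = aeval (φ X) F.num / aeval (φ X) F.denom := by
  conv_lhs => rw [← num_div_denom F]
  rw [map_div₀, ← aeval_X_left_eq_algebraMap, ← aeval_X_left_eq_algebraMap,
    ← Polynomial.aeval_algHom_apply, ← Polynomial.aeval_algHom_apply]

theorem algHom_ext {L : Type*} [Field L] [Algebra K L] {φ ψ : RatFunc K →ₐ[K] L}
    (h : φ X = ψ X) : φ = ψ :=
  AlgHom.ext fun F => by rw [algHom_apply φ, algHom_apply ψ, h]

@[simp]
theorem map_C {F : Type*} [FunLike F (RatFunc K) (RatFunc K)]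
    [AlgHomClass F K (RatFunc K) (RatFunc K)] (φ : F) (c : K) : φ (C c) = C c := by
  simpa only [algebraMap_eq_C] using AlgHomClass.commutes φ c

def subst (g : RatFunc K) (hg : Transcendental K g) : RatFunc K →ₐ[K] RatFunc K :=
  K⟮g⟯.val.comp (algEquivOfTranscendental g hg).toAlgHom

section Substitution

variable {g : RatFunc K} (hg : Transcendental K g)

theorem subst_apply (F : RatFunc K) : subst g hg F = aeval g F.num / aeval g F.denom :=
  algEquivOfTranscendental_apply g hg F

@[simp]
theorem subst_X : subst g hg X = g :=
  algEquivOfTranscendental_X g hg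

theorem subst_injective : Function.Injective (subst g hg) :=
  Subtype.val_injective.comp (algEquivOfTranscendental g hg).injective

theorem mem_adjoin_simple_iff_exists_subst {x : RatFunc K} :
    x ∈ K⟮g⟯ ↔ ∃ B, subst g hg B = x :=
  ⟨fun hx => ⟨(algEquivOfTranscendental g hg).symm ⟨x, hx⟩, by simp [subst]⟩,
    fun ⟨B, hB⟩ => hB ▸ ((algEquivOfTranscendental g hg) B).2⟩

theorem map_subst {F : Type*} [FunLike F (RatFunc K) (RatFunc K)]
    [AlgHomClass F K (RatFunc K) (RatFunc K)] (φ : F) {g' : RatFunc K}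
    (hg' : Transcendental K g') (h : φ g = g') (B : RatFunc K) :
    φ (subst g hg B) = subst g' hg' B := by
  subst h
  rw [subst_apply, subst_apply, map_div₀, ← Polynomial.aeval_algHom_apply,
    ← Polynomial.aeval_algHom_apply]

theorem transcendental_subst {h : RatFunc K} (hh : Transcendental K h) :
    Transcendental K (subst g hg h) :=
  mt (isAlgebraic_algHom_iff _ (subst_injective hg)).mp hh

end Substitution

theorem not_exists_eq_C_of_transcendental {f : RatFunc K} (hf : Transcendental K f) :
    ¬∃ c, f = C c := by
  rintro ⟨c, rfl⟩
  exact hf (isAlgebraic_algebraMap c)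

theorem transcendental_of_intDegree_ne_zero {f : RatFunc K} (hf : f.intDegree ≠ 0) :
    Transcendental K f :=
  transcendental_of_ne_C f (by rintro ⟨c, rfl⟩; exact hf (intDegree_C c))

theorem transcendental_C_mul_X {c : K} (hc : c ≠ 0) : Transcendental K (C c * X) :=
  transcendental_of_intDegree_ne_zero (by
    rw [intDegree_mul (by simpa using hc) X_ne_zero, intDegree_C, intDegree_X]; decide)

theorem transcendental_inv {f : RatFunc K} (hf : Transcendental K f) : Transcendental K f⁻¹ :=
  mt IsAlgebraic.inv_iff.mp hf

theorem transcendental_X_pow {n : ℕ} (hn : n ≠ 0) : Transcendental K (X ^ n : RatFunc K) :=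
  transcendental_X.pow (Nat.pos_of_ne_zero hn)

theorem fixedField_eq_adjoin_simple {H : Subgroup (RatFunc K ≃ₐ[K] RatFunc K)} [Finite H]
    {f : RatFunc K} (hf : f ∈ fixedField H) (hft : Transcendental K f)
    (hdeg : max f.num.natDegree f.denom.natDegree ≤ Nat.card H) : fixedField H = K⟮f⟯ := by
  have hrank := finrank_eq_max_natDegree f
  have hpos : 0 < max f.num.natDegree f.denom.natDegree := by
    by_contra h0
    exact not_exists_eq_C_of_transcendental hft ((eq_C_iff f).mpr (by omega))
  have : FiniteDimensional K⟮f⟯ (RatFunc K) := Module.finite_of_finrank_pos (hrank ▸ hpos)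
  have : Fintype H := Fintype.ofFinite H
  have hcard : Module.finrank (fixedField H) (RatFunc K) = Nat.card H := by
    rw [Nat.card_eq_fintype_card]
    exact FixedPoints.finrank_eq_card H (RatFunc K)
  exact (eq_of_le_of_finrank_le' (adjoin_simple_le_iff.mpr hf) (by omega)).symm

theorem mem_fixedField_zpowers_iff {σ : RatFunc K ≃ₐ[K] RatFunc K} {x : RatFunc K} :
    x ∈ fixedField (Subgroup.zpowers σ) ↔ σ x = x := by
  refine ⟨fun h => (mem_fixedField_iff _ x).mp h σ (Subgroup.mem_zpowers σ), fun h => ?_⟩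
  rw [mem_fixedField_iff]
  intro τ hτ
  exact (Subgroup.zpowers_le.mpr (show σ ∈ MulAction.stabilizer _ x from h)) hτ

theorem algEquiv_ext {σ τ : RatFunc K ≃ₐ[K] RatFunc K} (h : σ X = τ X) : σ = τ :=
  AlgEquiv.coe_toAlgHom_injective (algHom_ext h)

def scaleX : Kˣ →* (RatFunc K ≃ₐ[K] RatFunc K) where
  toFun c := AlgEquiv.ofAlgHom (subst _ (transcendental_C_mul_X c.ne_zero))
    (subst _ (transcendental_C_mul_X c⁻¹.ne_zero))
    (algHom_ext (by rw [AlgHom.comp_apply, subst_X, map_mul, map_C, subst_X, ← mul_assoc,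
      ← map_mul, Units.inv_mul, map_one, one_mul, AlgHom.id_apply]))
    (algHom_ext (by rw [AlgHom.comp_apply, subst_X, map_mul, map_C, subst_X, ← mul_assoc,
      ← map_mul, Units.mul_inv, map_one, one_mul, AlgHom.id_apply]))
  map_one' := algEquiv_ext (by simp)
  map_mul' c d := algEquiv_ext (by
    simp only [AlgEquiv.mul_apply, AlgEquiv.ofAlgHom_apply, subst_X, map_mul, map_C, Units.val_mul]
    ring)

@[simp]
theorem scaleX_apply_X (c : Kˣ) : scaleX c X = C (c : K) * X := subst_X _

theorem scaleX_injective : Function.Injective (scaleX (K := K)) := fun c d h => by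
  have := congr($h X)
  simp only [scaleX_apply_X] at this
  exact Units.ext (C.injective (mul_right_cancel₀ X_ne_zero this))

def invX : RatFunc K ≃ₐ[K] RatFunc K :=
  AlgEquiv.ofAlgHom (subst _ (transcendental_inv transcendental_X))
    (subst _ (transcendental_inv transcendental_X))
    (algHom_ext (by simp)) (algHom_ext (by simp))

theorem invX_apply (F : RatFunc K) : invX F = subst _ (transcendental_inv transcendental_X) F :=
  rfl

@[simp]
theorem invX_apply_X : invX (X : RatFunc K) = X⁻¹ := subst_X _

theorem orderOf_invX : orderOf (invX : RatFunc K ≃ₐ[K] RatFunc K) = 2 := by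
  refine orderOf_eq_prime (algEquiv_ext (by simp [sq])) fun h => ?_
  have := congr(intDegree ($h X))
  simp at this

theorem fixedField_zpowers_scaleX {n : ℕ} (hn : n ≠ 0) {ζ : Kˣ} (hζ : IsPrimitiveRoot ζ n) :
    fixedField (Subgroup.zpowers (scaleX ζ)) = K⟮X ^ n⟯ := by
  have hord : orderOf (scaleX ζ) = n :=
    (orderOf_injective _ scaleX_injective ζ).trans hζ.eq_orderOf.symm
  have : Finite (Subgroup.zpowers (scaleX ζ)) :=
    (finite_zpowers.mpr (orderOf_pos_iff.mp (hord ▸ Nat.pos_of_ne_zero hn))).to_subtype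
  refine fixedField_eq_adjoin_simple ?_ (transcendental_X_pow hn) ?_
  · rw [mem_fixedField_zpowers_iff, map_pow, scaleX_apply_X, mul_pow, ← map_pow,
      ← Units.val_pow_eq_pow_val, hζ.pow_eq_one, Units.val_one, map_one, one_mul]
  · rw [Nat.card_zpowers, hord, ← algebraMap_X, ← map_pow, num_algebraMap, denom_algebraMap]
    simp

theorem half_X_add_X_inv [NeZero (2 : K)] :
    ((X + X⁻¹) / 2 : RatFunc K) =
      algebraMap K[X] (RatFunc K) (Polynomial.X ^ 2 + 1) /
        algebraMap K[X] (RatFunc K) (Polynomial.C 2 * Polynomial.X) := by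
  have h2 : (2 : RatFunc K) = C 2 := (map_ofNat C 2).symm
  have : (2 : RatFunc K) ≠ 0 := h2 ▸ (_root_.map_ne_zero C).mpr two_ne_zero
  simp only [map_add, map_pow, map_mul, map_one, algebraMap_X, algebraMap_C, ← h2]
  field_simp

theorem max_natDegree_num_denom_div_le {p q : K[X]} (hp : p ≠ 0) (hq : q ≠ 0) :
    max (algebraMap K[X] (RatFunc K) p / algebraMap K[X] (RatFunc K) q).num.natDegree
      (algebraMap K[X] (RatFunc K) p / algebraMap K[X] (RatFunc K) q).denom.natDegree ≤
      max p.natDegree q.natDegree :=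
  max_le_max (natDegree_le_of_dvd (num_div_dvd p hq) hp)
    (natDegree_le_of_dvd (denom_div_dvd p q) hq)

theorem natDegree_X_sq_add_one : (Polynomial.X ^ 2 + 1 : K[X]).natDegree = 2 :=
  natDegree_X_pow_add_C

theorem natDegree_C_two_mul_X [NeZero (2 : K)] :
    (Polynomial.C 2 * Polynomial.X : K[X]).natDegree = 1 :=
  natDegree_C_mul_X 2 two_ne_zero

theorem X_sq_add_one_ne_zero : (Polynomial.X ^ 2 + 1 : K[X]) ≠ 0 :=
  ne_zero_of_natDegree_gt (n := 0) (by rw [natDegree_X_sq_add_one]; exact two_pos)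

theorem C_two_mul_X_ne_zero [NeZero (2 : K)] : (Polynomial.C 2 * Polynomial.X : K[X]) ≠ 0 :=
  ne_zero_of_natDegree_gt (n := 0) (by rw [natDegree_C_two_mul_X]; exact one_pos)

theorem transcendental_half_X_add_X_inv [NeZero (2 : K)] :
    Transcendental K ((X + X⁻¹) / 2 : RatFunc K) := by
  refine transcendental_of_intDegree_ne_zero ?_
  rw [half_X_add_X_inv,
    intDegree_div (algebraMap_ne_zero X_sq_add_one_ne_zero)
      (algebraMap_ne_zero C_two_mul_X_ne_zero),
    intDegree_polynomial, intDegree_polynomial, natDegree_X_sq_add_one, natDegree_C_two_mul_X]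
  decide

theorem max_natDegree_half_X_add_X_inv_le [NeZero (2 : K)] :
    max ((X + X⁻¹) / 2 : RatFunc K).num.natDegree ((X + X⁻¹) / 2 : RatFunc K).denom.natDegree
      ≤ 2 := by
  rw [half_X_add_X_inv]
  refine (max_natDegree_num_denom_div_le X_sq_add_one_ne_zero C_two_mul_X_ne_zero).trans ?_
  rw [natDegree_X_sq_add_one, natDegree_C_two_mul_X]
  decide

theorem fixedField_zpowers_invX [NeZero (2 : K)] :
    fixedField (Subgroup.zpowers (invX : RatFunc K ≃ₐ[K] RatFunc K)) = K⟮(X + X⁻¹) / 2⟯ := by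
  have : Finite (Subgroup.zpowers (invX : RatFunc K ≃ₐ[K] RatFunc K)) :=
    (finite_zpowers.mpr (orderOf_pos_iff.mp (by rw [orderOf_invX]; exact two_pos))).to_subtype
  refine fixedField_eq_adjoin_simple ?_ transcendental_half_X_add_X_inv ?_
  · rw [mem_fixedField_zpowers_iff, map_div₀, map_add, map_inv₀, invX_apply_X, inv_inv,
      map_ofNat, add_comm]
  · rw [Nat.card_zpowers, orderOf_invX]
    exact max_natDegree_half_X_add_X_inv_le

section Expand

variable {n : ℕ} [NeZero n]

def expand (n : ℕ) [NeZero n] : RatFunc K →ₐ[K] RatFunc K :=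
  subst (X ^ n) (transcendental_X_pow (NeZero.ne n))

@[simp]
theorem expand_X : expand n (X : RatFunc K) = X ^ n := subst_X _

theorem expand_injective : Function.Injective (expand n : RatFunc K → RatFunc K) :=
  subst_injective _

theorem mem_adjoin_X_pow_iff {x : RatFunc K} : x ∈ K⟮X ^ n⟯ ↔ ∃ S, expand n S = x :=
  mem_adjoin_simple_iff_exists_subst _

theorem map_expand {F : Type*} [FunLike F (RatFunc K) (RatFunc K)]
    [AlgHomClass F K (RatFunc K) (RatFunc K)] (φ : F) {g : RatFunc K} (hg : Transcendental K g)
    (h : φ (X ^ n) = g) (B : RatFunc K) : φ (expand n B) = subst g hg B :=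
  map_subst _ φ hg h B

theorem scaleX_eq_C_zpow_mul_iff {ζ : Kˣ} (hζ : IsPrimitiveRoot ζ n) (F : RatFunc K) (r : ℤ) :
    scaleX ζ F = C ((ζ : K) ^ r) * F ↔ ∃ S, F = X ^ r * expand n S := by
  have hXn : scaleX ζ (X ^ n) = X ^ n := by
    rw [← mem_fixedField_zpowers_iff, fixedField_zpowers_scaleX (NeZero.ne n) hζ]
    exact mem_adjoin_simple_self K _
  have hXr : scaleX ζ (X ^ r) = C ((ζ : K) ^ r) * X ^ r := by
    rw [map_zpow₀, scaleX_apply_X, mul_zpow, map_zpow₀]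
  constructor
  · intro hF
    have hfix : X ^ (-r) * F ∈ fixedField (Subgroup.zpowers (scaleX ζ)) := by
      rw [mem_fixedField_zpowers_iff, map_mul, hF, zpow_neg, map_inv₀, hXr]
      field_simp
    rw [fixedField_zpowers_scaleX (NeZero.ne n) hζ] at hfix
    obtain ⟨S, hS⟩ := mem_adjoin_X_pow_iff.mp hfix
    refine ⟨S, ?_⟩
    rw [hS, ← mul_assoc, ← zpow_add₀ X_ne_zero, add_neg_cancel, zpow_zero, one_mul]
  · rintro ⟨S, rfl⟩
    rw [map_mul, hXr, map_expand _ _ hXn, mul_assoc]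
    rfl

theorem invX_expand (S : RatFunc K) : invX (expand n S) = expand n (invX S) := by
  have hT : Transcendental K ((X : RatFunc K) ^ n)⁻¹ :=
    transcendental_inv (transcendental_X_pow (NeZero.ne n))
  rw [map_expand invX hT (by rw [map_pow, invX_apply_X, inv_pow]), invX_apply,
    map_subst _ _ hT (by rw [map_inv₀, expand_X])]

theorem X_zpow_mul_expand_mul_invX (r : ℤ) (S : RatFunc K) :
    X ^ r * expand n S * invX (X ^ r * expand n S) = expand n (S * invX S) := by
  rw [map_mul, map_zpow₀, invX_apply_X, invX_expand, map_mul, inv_zpow,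
    mul_mul_mul_comm, mul_inv_cancel₀ (zpow_ne_zero r X_ne_zero), one_mul]

theorem expand_half_X_add_X_inv :
    expand n ((X + X⁻¹) / 2) = ((X ^ n + (X ^ n)⁻¹) / 2 : RatFunc K) := by
  rw [map_div₀, map_add, map_inv₀, expand_X, map_ofNat]

theorem transcendental_half_X_pow_add_X_pow_inv [NeZero (2 : K)] (n : ℕ) [NeZero n] :
    Transcendental K ((X ^ n + (X ^ n)⁻¹) / 2 : RatFunc K) :=
  expand_half_X_add_X_inv (K := K) (n := n) ▸
    transcendental_subst _ transcendental_half_X_add_X_inv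

theorem exists_eq_expand_of_equivariant [IsAlgClosed K] {ζ : Kˣ} (hζ : IsPrimitiveRoot ζ n)
    {F : RatFunc K} {r k : ℤ} (hr : scaleX ζ F = C ((ζ : K) ^ r) * F)
    (hk : F * invX F = C ((ζ : K) ^ k)) :
    ∃ (ε : K) (R : RatFunc K), ε ^ (2 * n) = 1 ∧ R * invX R = 1 ∧
      F = C ε * X ^ r * expand n R := by
  obtain ⟨S, rfl⟩ := (scaleX_eq_C_zpow_mul_iff hζ F r).mp hr
  have hS : S * invX S = C ((ζ : K) ^ k) :=
    expand_injective (n := n) (by rw [← X_zpow_mul_expand_mul_invX r S, hk, map_C])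
  obtain ⟨ε, hε⟩ := IsAlgClosed.exists_pow_nat_eq ((ζ : K) ^ k) two_pos
  have hε0 : ε ≠ 0 := by
    rintro rfl
    exact zpow_ne_zero k ζ.ne_zero (by simpa using hε.symm)
  refine ⟨ε, C ε⁻¹ * S, ?_, ?_, ?_⟩
  · rw [pow_mul, hε, ← zpow_natCast, ← zpow_mul, mul_comm, zpow_mul, zpow_natCast,
      (IsPrimitiveRoot.coe_units_iff.mpr hζ).pow_eq_one, one_zpow]
  · rw [map_mul, map_C, mul_mul_mul_comm, hS, ← map_mul, ← map_mul, ← mul_inv, ← sq, hε,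
      inv_mul_cancel₀ (zpow_ne_zero k ζ.ne_zero), map_one]
  · rw [map_mul, map_C, ← mul_assoc, mul_comm _ (C ε⁻¹), ← mul_assoc, ← map_mul,
      inv_mul_cancel₀ hε0, map_one, one_mul]

theorem equivariant_of_eq_expand {ζ : Kˣ} (hζ : IsPrimitiveRoot ζ n) {ε : K}
    (hε : ε ^ (2 * n) = 1) (r : ℤ) {R : RatFunc K} (hR : R * invX R = 1) :
    scaleX ζ (C ε * X ^ r * expand n R) = C ((ζ : K) ^ r) * (C ε * X ^ r * expand n R) ∧
      ∃ k : ℤ, C ε * X ^ r * expand n R * invX (C ε * X ^ r * expand n R) = C ((ζ : K) ^ k) := by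
  refine ⟨?_, ?_⟩
  · rw [mul_assoc, map_mul, map_C, (scaleX_eq_C_zpow_mul_iff hζ _ r).mpr ⟨R, rfl⟩,
      mul_left_comm]
  · obtain ⟨k, -, hk⟩ := (IsPrimitiveRoot.coe_units_iff.mpr hζ).eq_pow_of_pow_eq_one
      (ξ := ε ^ 2) (by rw [← pow_mul, hε])
    refine ⟨k, ?_⟩
    rw [mul_assoc (C ε), map_mul, map_C, mul_mul_mul_comm, X_zpow_mul_expand_mul_invX, hR,
      map_one, mul_one, ← map_mul, ← sq, zpow_natCast, hk]

theorem exists_semiconj [NeZero (2 : K)] {ε : K} (hε : ε ^ (2 * n) = 1) (r : ℤ)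
    {R : RatFunc K} (hR : R * invX R = 1) :
    ∃ A, subst _ (transcendental_half_X_pow_add_X_pow_inv n) A =
        ((C ε * X ^ r * expand n R) ^ n + ((C ε * X ^ r * expand n R) ^ n)⁻¹) / 2 ∧
      subst _ transcendental_half_X_add_X_inv A =
        C (ε ^ n) * ((X ^ r * R ^ n + (X ^ r * R ^ n)⁻¹) / 2) := by
  set G := X ^ r * R ^ n
  have hτG : invX G = G⁻¹ := by
    rw [map_mul, map_zpow₀, map_pow, invX_apply_X, eq_inv_of_mul_eq_one_right hR, inv_zpow,
      inv_pow, mul_inv]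
  obtain ⟨A, hA⟩ :
      ∃ A, subst _ transcendental_half_X_add_X_inv A = C (ε ^ n) * ((G + G⁻¹) / 2) := by
    rw [← mem_adjoin_simple_iff_exists_subst, ← fixedField_zpowers_invX,
      mem_fixedField_zpowers_iff, map_mul, map_C, map_div₀, map_add, map_inv₀, hτG, inv_inv,
      map_ofNat, add_comm]
  refine ⟨A, ?_, hA⟩
  have hFn : (C ε * X ^ r * expand n R) ^ n = C (ε ^ n) * expand n G := by
    rw [map_mul, map_zpow₀, map_pow (expand n), expand_X, mul_pow, mul_pow, ← map_pow C,
      ← zpow_natCast (X ^ r), zpow_comm, zpow_natCast, mul_assoc]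
  have hεn : (ε ^ n)⁻¹ = ε ^ n :=
    inv_eq_of_mul_eq_one_right (by rw [← pow_add, ← two_mul, hε])
  rw [← map_subst transcendental_half_X_add_X_inv (expand n) _ expand_half_X_add_X_inv, hA, hFn,
    mul_inv (C (ε ^ n)), ← map_inv₀ C, hεn]
  simp only [map_mul, map_C, map_div₀, map_add, map_inv₀, map_ofNat]
  ring

end Expand

end RatFunc

namespace GenLattes

open RatFunc

theorem rcomp_eq_subst {g : RatFunc ℂ} (hg : Transcendental ℂ g) (F : RatFunc ℂ) :
    rcomp F g = subst g hg F :=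
  (subst_apply hg F).symm

theorem dihedral_equivariant_general (n : ℕ) (hn : 2 < n) (ζ : ℂ) (hζ : IsPrimitiveRoot ζ n)
    (F : RatFunc ℂ) :
    (((∃ r : ℤ, Int.gcd r n = 1 ∧
          rcomp F (RatFunc.C ζ * RatFunc.X) = RatFunc.C (ζ ^ r) * F) ∧
        (∃ k : ℤ, F * rcomp F RatFunc.X⁻¹ = RatFunc.C (ζ ^ k))) ↔
      (∃ (ε : ℂ) (r : ℤ) (R : RatFunc ℂ), ε ^ (2 * n) = 1 ∧ Int.gcd r n = 1 ∧
        R * rcomp R RatFunc.X⁻¹ = 1 ∧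
        F = RatFunc.C ε * RatFunc.X ^ r * rcomp R (RatFunc.X ^ n))) ∧
    (∀ (ε : ℂ) (r : ℤ) (R : RatFunc ℂ), ε ^ (2 * n) = 1 → Int.gcd r n = 1 →
      R * rcomp R RatFunc.X⁻¹ = 1 →
      F = RatFunc.C ε * RatFunc.X ^ r * rcomp R (RatFunc.X ^ n) →
      ∃ A : RatFunc ℂ,
        rcomp A ((RatFunc.X ^ n + (RatFunc.X ^ n)⁻¹) / 2) = (F ^ n + (F ^ n)⁻¹) / 2 ∧
        rcomp A ((RatFunc.X + RatFunc.X⁻¹) / 2) =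
          RatFunc.C (ε ^ n) *
            ((RatFunc.X ^ r * R ^ n + (RatFunc.X ^ r * R ^ n)⁻¹) / 2) ∧
        ∀ A' : RatFunc ℂ,
          rcomp A' ((RatFunc.X ^ n + (RatFunc.X ^ n)⁻¹) / 2) =
              (F ^ n + (F ^ n)⁻¹) / 2 →
          A' = A) := by
  have : NeZero n := ⟨by omega⟩
  set u : ℂˣ := Units.mk0 ζ (hζ.ne_zero (NeZero.ne n))
  have hu : IsPrimitiveRoot u n := IsPrimitiveRoot.coe_units_iff.mp hζ
  have hσ (G : RatFunc ℂ) : rcomp G (RatFunc.C ζ * RatFunc.X) = scaleX u G :=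
    rcomp_eq_subst (transcendental_C_mul_X u.ne_zero) G
  have hτ (G : RatFunc ℂ) : rcomp G RatFunc.X⁻¹ = invX G := rcomp_eq_subst _ G
  have hπ (G : RatFunc ℂ) : rcomp G (RatFunc.X ^ n) = expand n G := rcomp_eq_subst _ G
  have hv (A : RatFunc ℂ) : rcomp A ((RatFunc.X ^ n + (RatFunc.X ^ n)⁻¹) / 2) =
      subst _ (transcendental_half_X_pow_add_X_pow_inv n) A := rcomp_eq_subst _ A
  have hw (A : RatFunc ℂ) : rcomp A ((RatFunc.X + RatFunc.X⁻¹) / 2) =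
      subst _ transcendental_half_X_add_X_inv A := rcomp_eq_subst _ A
  simp only [hσ, hτ, hπ, hv, hw]
  refine ⟨⟨fun ⟨⟨r, hr, hF⟩, k, hk⟩ => ?_, fun ⟨ε, r, R, hε, hr, hR, hF⟩ => ?_⟩,
    fun ε r R hε _ hR hF => ?_⟩
  · obtain ⟨ε, R, hε, hR, hFR⟩ := exists_eq_expand_of_equivariant hu hF hk
    exact ⟨ε, r, R, hε, hr, hR, hFR⟩
  · obtain ⟨hσF, hτF⟩ := equivariant_of_eq_expand hu hε r hR
    exact hF ▸ ⟨⟨r, hr, hσF⟩, hτF⟩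
  · obtain ⟨A, hA, hA'⟩ := exists_semiconj hε r hR
    exact hF ▸ ⟨A, hA, hA', fun A' h => subst_injective _ (h.trans hA.symm)⟩

/-- **Theorem (equivariant rational functions for the dihedral group, and good solutions
of `A ∘ ½(z^n + z^{-n}) = ½(z^n + z^{-n}) ∘ F`).** A nonconstant `F` satisfies
`F(ζX) = ζ^r F(X)` (for some integer `r` coprime with `n`) and `F(X)·F(X⁻¹) = ζ^k` (for
some integer `k`) iff `F = ε X^r R(X^n)` with `ε^{2n} = 1`, `gcd(r,n) = 1`, and
`R(X)·R(X⁻¹) = 1`; and in that case there is a unique `A` with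
`A((X^n + X^{-n})/2) = (F^n + F^{-n})/2`, which moreover satisfies
`A((X + X⁻¹)/2) = ε^n (G + G⁻¹)/2` for `G = X^r R(X)^n`. -/
theorem dihedral_equivariant (n : ℕ) (hn : 2 < n) (ζ : ℂ) (hζ : IsPrimitiveRoot ζ n)
    (F : RatFunc ℂ) (hF : 1 ≤ rdeg F) :
    (((∃ r : ℤ, Int.gcd r n = 1 ∧
          rcomp F (RatFunc.C ζ * RatFunc.X) = RatFunc.C (ζ ^ r) * F) ∧
        (∃ k : ℤ, F * rcomp F RatFunc.X⁻¹ = RatFunc.C (ζ ^ k))) ↔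
      (∃ (ε : ℂ) (r : ℤ) (R : RatFunc ℂ), ε ^ (2 * n) = 1 ∧ Int.gcd r n = 1 ∧
        R * rcomp R RatFunc.X⁻¹ = 1 ∧
        F = RatFunc.C ε * RatFunc.X ^ r * rcomp R (RatFunc.X ^ n))) ∧
    (∀ (ε : ℂ) (r : ℤ) (R : RatFunc ℂ), ε ^ (2 * n) = 1 → Int.gcd r n = 1 →
      R * rcomp R RatFunc.X⁻¹ = 1 →
      F = RatFunc.C ε * RatFunc.X ^ r * rcomp R (RatFunc.X ^ n) →
      ∃ A : RatFunc ℂ,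
        rcomp A ((RatFunc.X ^ n + (RatFunc.X ^ n)⁻¹) / 2) = (F ^ n + (F ^ n)⁻¹) / 2 ∧
        rcomp A ((RatFunc.X + RatFunc.X⁻¹) / 2) =
          RatFunc.C (ε ^ n) *
            ((RatFunc.X ^ r * R ^ n + (RatFunc.X ^ r * R ^ n)⁻¹) / 2) ∧
        ∀ A' : RatFunc ℂ,
          rcomp A' ((RatFunc.X ^ n + (RatFunc.X ^ n)⁻¹) / 2) =
              (F ^ n + (F ^ n)⁻¹) / 2 →
          A' = A) :=
  dihedral_equivariant_general n hn ζ hζ F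

end GenLattes
end
end
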